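/- arXiv:0805.2640 — 4 statements merged into one kernel-verified Lean document; each statement's English description precedes it below -/
import Mathlib

section
/- With the notation above, the orthonormal trigonometric polynomials π_n(θ) = π_n(e^{iθ}) and σ_n(θ) = σ_n(e^{iθ}) have no common zero: there is no θ ∈ [0, 2π) with π_n(e^{iθ}) = 0 = σ_n(e^{iθ}), for any n ≥ 1. -/
open MeasureTheory Complex Polynomial

noncomputable section

/-- The ordered Laurent trigonometric basis: `1, (z-z⁻¹)/(2i), (z+z⁻¹)/2, …`;
`lbase (2k) z = (z^k + z⁻ᵏ)/2`, `lbase (2k-1) z = (z^k - z⁻ᵏ)/(2i)`. -/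
def lbase (n : ℕ) (z : ℂ) : ℂ :=
  if Even n then (z ^ (n / 2) + (z⁻¹) ^ (n / 2)) / 2
  else (z ^ ((n + 1) / 2) - (z⁻¹) ^ ((n + 1) / 2)) / (2 * Complex.I)

/-- Real inner product `⟨f,g⟩_ℝ = ∫ f g dμ` over the unit circle parametrized by the angle. -/
def innerR (μ : Measure ℝ) (f g : ℂ → ℂ) : ℂ :=
  ∫ θ, f (Complex.exp (θ * Complex.I)) * g (Complex.exp (θ * Complex.I)) ∂μ

/-- Complex inner product `⟨f,g⟩_ℂ = ∫ conj f · g dμ` over the unit circle. -/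
def innerC (μ : Measure ℝ) (f g : ℂ → ℂ) : ℂ :=
  ∫ θ, (starRingEnd ℂ) (f (Complex.exp (θ * Complex.I))) * g (Complex.exp (θ * Complex.I)) ∂μ

/-- Conjugate-reversed polynomial `p*(z) = z^(deg p) conj (p (1/ conj z))`. -/
def srev (p : Polynomial ℂ) : Polynomial ℂ := (p.map (starRingEnd ℂ)).reverse

/-- The setting of the paper: a nontrivial probability measure on the unit circle,
the first orthonormal Laurent polynomials `L n` (with `σ n = L (2n)`, `π n = L (2n-1)`),
the Gram–Schmidt constants `a, b, β`, the monic OPUC `Φ` and the leading coefficients `κ`. -/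
structure OTPSetup where
  μ : Measure ℝ
  prob : IsProbabilityMeasure μ
  nontriv : ∀ p : Polynomial ℂ, innerC μ (fun z => p.eval z) (fun z => p.eval z) = 0 → p = 0
  L : ℕ → ℂ → ℂ
  σ : ℕ → ℂ → ℂ
  π : ℕ → ℂ → ℂ
  a : ℕ → ℝ
  b : ℕ → ℝ
  β : ℕ → ℝ
  Φ : ℕ → Polynomial ℂ
  κ : ℕ → ℝ
  L_zero : L 0 = fun _ => 1
  orthonormal : ∀ m n, innerR μ (L m) (L n) = if m = n then 1 else 0
  mem_span : ∀ n, L n ∈ Submodule.span ℝ (lbase '' Set.Iic n)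
  lead_pos : ∀ n, 0 < (innerR μ (lbase n) (L n)).re
  lead_real : ∀ n, (innerR μ (lbase n) (L n)).im = 0
  σ_def : ∀ n, 1 ≤ n → σ n = L (2 * n)
  π_def : ∀ n, 1 ≤ n → π n = L (2 * n - 1)
  σ_zero : σ 0 = fun _ => 1
  π_zero : π 0 = fun _ => 0
  a_def : ∀ n, 1 ≤ n → (a n : ℂ) = innerR μ (lbase (2 * n)) (L (2 * n))
  b_def : ∀ n, 1 ≤ n → (b n : ℂ) = innerR μ (lbase (2 * n - 1)) (L (2 * n - 1))
  β_def : ∀ n, 1 ≤ n → ((β n * b n : ℝ) : ℂ) = innerR μ (lbase (2 * n)) (L (2 * n - 1))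
  a_zero : a 0 = 1
  b_zero : b 0 = 1
  β_zero : β 0 = 0
  a_pos : ∀ n, 0 < a n
  b_pos : ∀ n, 0 < b n
  Φ_monic : ∀ m, (Φ m).Monic
  Φ_deg : ∀ m, (Φ m).natDegree = m
  Φ_orth : ∀ m k, k < m → innerC μ (fun z => z ^ k) (fun z => (Φ m).eval z) = 0
  κ_pos : ∀ m, 0 < κ m
  κ_def : ∀ m, ((κ m : ℝ) : ℂ) ^ 2 * innerC μ (fun z => (Φ m).eval z) (fun z => (Φ m).eval z) = 1

/-- Verblunsky coefficients `α n = - conj (Φ (n+1) 0)`. -/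
def OTPSetup.α (S : OTPSetup) (m : ℕ) : ℂ := -(starRingEnd ℂ) ((S.Φ (m + 1)).eval 0)


namespace OTP5

/-- Point on the unit circle at angle `θ`. -/
def cir (θ : ℝ) : ℂ := Complex.exp (θ * Complex.I)

lemma cir_ne_zero (θ : ℝ) : cir θ ≠ 0 := Complex.exp_ne_zero _

lemma norm_cir (θ : ℝ) : ‖cir θ‖ = 1 := by
  exact Complex.norm_exp_ofReal_mul_I θ

lemma conj_mul_cir (θ : ℝ) : (starRingEnd ℂ) (cir θ) * cir θ = 1 := by
  rw [mul_comm, Complex.mul_conj, Complex.normSq_eq_norm_sq, norm_cir]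
  norm_num

lemma conj_cir (θ : ℝ) : (starRingEnd ℂ) (cir θ) = (cir θ)⁻¹ :=
  eq_inv_of_mul_eq_one_left (conj_mul_cir θ)

lemma continuous_cir : Continuous cir :=
  Complex.continuous_exp.comp (Complex.continuous_ofReal.mul continuous_const)

/-- Bounded measurable functions on the circle. -/
def Bdd (f : ℂ → ℂ) : Prop :=
  Measurable (fun θ : ℝ => f (cir θ)) ∧ ∃ C : ℝ, ∀ θ : ℝ, ‖f (cir θ)‖ ≤ C

lemma Bdd.add {f g : ℂ → ℂ} (hf : Bdd f) (hg : Bdd g) : Bdd (fun z => f z + g z) := by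
  obtain ⟨Cf, hCf⟩ := hf.2; obtain ⟨Cg, hCg⟩ := hg.2
  exact ⟨hf.1.add hg.1, Cf + Cg, fun θ =>
    le_trans (norm_add_le _ _) (add_le_add (hCf θ) (hCg θ))⟩

lemma Bdd.mul {f g : ℂ → ℂ} (hf : Bdd f) (hg : Bdd g) : Bdd (fun z => f z * g z) := by
  obtain ⟨Cf, hCf⟩ := hf.2; obtain ⟨Cg, hCg⟩ := hg.2
  refine ⟨hf.1.mul hg.1, Cf * Cg, fun θ => ?_⟩
  rw [norm_mul]
  exact mul_le_mul (hCf θ) (hCg θ) (norm_nonneg _) (le_trans (norm_nonneg _) (hCf θ))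

lemma Bdd.const_mul {f : ℂ → ℂ} (c : ℂ) (hf : Bdd f) : Bdd (fun z => c * f z) := by
  obtain ⟨Cf, hCf⟩ := hf.2
  refine ⟨hf.1.const_mul c, ‖c‖ * Cf, fun θ => ?_⟩
  rw [norm_mul]
  exact mul_le_mul_of_nonneg_left (hCf θ) (norm_nonneg _)

lemma bdd_zero : Bdd (fun _ => (0 : ℂ)) := ⟨measurable_const, 0, fun θ => by simp⟩

lemma bdd_lbase (k : ℕ) : Bdd (lbase k) := by
  have h1 : ∀ (m : ℕ) (θ : ℝ), ‖(cir θ) ^ m‖ = 1 := fun m θ => by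
    rw [norm_pow, norm_cir, one_pow]
  have h2 : ∀ (m : ℕ) (θ : ℝ), ‖((cir θ)⁻¹) ^ m‖ = 1 := fun m θ => by
    rw [norm_pow, norm_inv, norm_cir]; norm_num
  have hc : ∀ m : ℕ, Measurable fun θ : ℝ => (cir θ) ^ m := fun m =>
    (continuous_cir.pow m).measurable
  have hc' : ∀ m : ℕ, Measurable fun θ : ℝ => ((cir θ)⁻¹) ^ m := fun m =>
    (((continuous_cir.inv₀ cir_ne_zero).pow m)).measurable
  unfold lbase
  split_ifs with h
  · refine ⟨((hc _).add (hc' _)).div_const 2, 1, fun θ => ?_⟩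
    rw [norm_div]
    refine div_le_one_of_le₀ (le_trans (norm_add_le _ _) ?_) (norm_nonneg _)
    rw [h1, h2]
    norm_num
  · refine ⟨((hc _).sub (hc' _)).div_const _, 1, fun θ => ?_⟩
    rw [norm_div]
    refine div_le_one_of_le₀ (le_trans (norm_sub_le _ _) ?_) (norm_nonneg _)
    rw [h1, h2]
    simp [norm_mul]
    norm_num

lemma bdd_id : Bdd (fun z => z) := ⟨continuous_cir.measurable, 1, fun θ => le_of_eq (norm_cir θ)⟩

lemma bdd_inv_pow (k : ℕ) : Bdd (fun z => (z⁻¹) ^ k) :=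
  ⟨((continuous_cir.inv₀ cir_ne_zero).pow k).measurable, 1, fun θ => by
    rw [norm_pow, norm_inv, norm_cir]; norm_num⟩

lemma bdd_polyeval (p : Polynomial ℂ) : Bdd (fun z => p.eval z) := by
  refine ⟨(p.continuous.comp continuous_cir).measurable,
    ∑ i ∈ Finset.range (p.natDegree + 1), ‖p.coeff i‖, fun θ => ?_⟩
  show ‖p.eval (cir θ)‖ ≤ _
  rw [Polynomial.eval_eq_sum_range]
  refine le_trans (norm_sum_le _ _) (Finset.sum_le_sum fun i _ => ?_)
  rw [norm_mul, norm_pow, norm_cir, one_pow, mul_one]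

lemma bdd_conj {f : ℂ → ℂ} (hf : Bdd f) : Bdd (fun z => (starRingEnd ℂ) (f z)) := by
  obtain ⟨C, hC⟩ := hf.2
  exact ⟨Complex.continuous_conj.measurable.comp hf.1, C, fun θ => by rw [RCLike.norm_conj]; exact hC θ⟩

lemma integrable_mul {μ : Measure ℝ} [IsFiniteMeasure μ] {f g : ℂ → ℂ}
    (hf : Bdd f) (hg : Bdd g) : Integrable (fun θ => f (cir θ) * g (cir θ)) μ := by
  obtain ⟨Cf, hCf⟩ := hf.2; obtain ⟨Cg, hCg⟩ := hg.2
  refine Integrable.mono' (integrable_const (Cf * Cg))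
    ((hf.1.mul hg.1).aestronglyMeasurable) (ae_of_all _ fun θ => ?_)
  rw [norm_mul]
  exact mul_le_mul (hCf θ) (hCg θ) (norm_nonneg _) (le_trans (norm_nonneg _) (hCf θ))

lemma innerR_cir (μ : Measure ℝ) (f g : ℂ → ℂ) :
    innerR μ f g = ∫ θ, f (cir θ) * g (cir θ) ∂μ := rfl

lemma innerC_cir (μ : Measure ℝ) (f g : ℂ → ℂ) :
    innerC μ f g = ∫ θ, (starRingEnd ℂ) (f (cir θ)) * g (cir θ) ∂μ := rfl

lemma innerR_smul_left (μ : Measure ℝ) (c : ℂ) (f g : ℂ → ℂ) :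
    innerR μ (fun z => c * f z) g = c * innerR μ f g := by
  rw [innerR_cir, innerR_cir, ← smul_eq_mul (α := ℂ), ← integral_smul]
  congr 1
  funext θ
  rw [smul_eq_mul, mul_assoc]

lemma innerR_sum_left (μ : Measure ℝ) [IsFiniteMeasure μ] {s : Finset ℕ} {F : ℕ → ℂ → ℂ}
    (hF : ∀ k ∈ s, Bdd (F k)) (g : ℂ → ℂ) (hg : Bdd g) :
    innerR μ (fun z => ∑ k ∈ s, F k z) g = ∑ k ∈ s, innerR μ (F k) g := by
  rw [innerR_cir]
  have : (fun θ : ℝ => (∑ k ∈ s, F k (cir θ)) * g (cir θ))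
      = fun θ : ℝ => ∑ k ∈ s, F k (cir θ) * g (cir θ) := funext fun θ => by
    rw [Finset.sum_mul]
  rw [this, integral_finset_sum s fun k hk => integrable_mul (hF k hk) hg]
  rfl

lemma bdd_L (S : OTPSetup) (k : ℕ) : Bdd (S.L k) := by
  refine Submodule.span_induction (p := fun f _ => Bdd f) ?_ bdd_zero ?_ ?_ (S.mem_span k)
  · rintro f ⟨j, -, rfl⟩; exact bdd_lbase j
  · intro x y _ _ hx hy; exact hx.add hy
  · intro r x _ hx
    obtain ⟨C, hC⟩ := hx.2
    refine ⟨?_, |r| * C, fun θ => ?_⟩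
    · exact hx.1.const_smul r
    · rw [Pi.smul_apply, norm_smul, Real.norm_eq_abs]
      exact mul_le_mul_of_nonneg_left (hC θ) (abs_nonneg r)

lemma innerR_L_rep (S : OTPSetup) (t : ℕ →₀ ℝ) (m : ℕ) :
    innerR S.μ (fun z => ∑ k ∈ t.support, (t k : ℂ) * S.L k z) (S.L m) = (t m : ℂ) := by
  haveI := S.prob
  rw [innerR_sum_left S.μ (fun k _ => (bdd_L S k).const_mul _) _ (bdd_L S m)]
  have h1 : ∀ k ∈ t.support,
      innerR S.μ (fun z => (t k : ℂ) * S.L k z) (S.L m) = if k = m then (t k : ℂ) else 0 := by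
    intro k _
    rw [innerR_smul_left, S.orthonormal]
    simp
  rw [Finset.sum_congr rfl h1, Finset.sum_ite_eq' t.support m]
  by_cases hm : m ∈ t.support
  · simp [hm]
  · simp [hm, Finsupp.notMem_support_iff.1 hm]

lemma rep_fun (v : ℕ → ℂ → ℂ) (t : ℕ →₀ ℝ) :
    (Finsupp.linearCombination ℝ v t : ℂ → ℂ) = fun z => ∑ k ∈ t.support, (t k : ℂ) * v k z := by
  funext z
  rw [Finsupp.linearCombination_apply, Finsupp.sum, Finset.sum_apply]
  exact Finset.sum_congr rfl fun k _ => by rw [Pi.smul_apply, Complex.real_smul]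

set_option maxHeartbeats 1000000 in
lemma lbase_mem_spanL (S : OTPSetup) : ∀ j, lbase j ∈ Submodule.span ℝ (S.L '' Set.Iic j) := by
  intro j
  induction j using Nat.strong_induction_on with
  | _ j IH =>
  obtain ⟨t, ht, hsum⟩ := (Finsupp.mem_span_image_iff_linearCombination ℝ).1 (S.mem_span j)
  rw [Finsupp.mem_supported] at ht
  have hts : ∀ k ∈ t.support, k ≤ j := fun k hk => ht hk
  set r : ℂ → ℂ := ∑ k ∈ t.support.erase j, t k • lbase k with hr_def
  have hrmem : r ∈ Submodule.span ℝ (S.L '' Set.Iio j) := by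
    refine Submodule.sum_mem _ fun k hk => Submodule.smul_mem _ _ ?_
    have hkj : k < j := lt_of_le_of_ne (hts k (Finset.mem_of_mem_erase hk))
      (Finset.ne_of_mem_erase hk)
    exact Submodule.span_mono
      (Set.image_mono fun x hx => lt_of_le_of_lt hx hkj) (IH k hkj)
  have hLj : S.L j = t j • lbase j + r := by
    rw [← hsum, Finsupp.linearCombination_apply, Finsupp.sum]
    by_cases hj : j ∈ t.support
    · exact (Finset.add_sum_erase _ _ hj).symm
    · rw [Finsupp.notMem_support_iff.1 hj, zero_smul, zero_add, hr_def,
        Finset.erase_eq_of_notMem hj]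
  by_cases htj : t j = 0
  · exfalso
    have hLr : S.L j ∈ Submodule.span ℝ (S.L '' Set.Iio j) := by
      rw [hLj, htj, zero_smul, zero_add]; exact hrmem
    obtain ⟨u, hu, husum⟩ := (Finsupp.mem_span_image_iff_linearCombination ℝ).1 hLr
    rw [Finsupp.mem_supported] at hu
    have heq : S.L j = (fun z => ∑ k ∈ u.support, (u k : ℂ) * S.L k z) := by
      rw [← husum, rep_fun]
    have h1 : innerR S.μ (fun z => ∑ k ∈ u.support, (u k : ℂ) * S.L k z) (S.L j) = 1 := by
      rw [← heq, S.orthonormal]; simp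
    rw [innerR_L_rep] at h1
    have huj : u j = 0 := Finsupp.notMem_support_iff.1 fun hmem => lt_irrefl j (hu hmem)
    rw [huj] at h1
    simp at h1
  · have h2 : t j • lbase j = S.L j - r := by rw [hLj, add_sub_cancel_right]
    have h4 : t j • lbase j ∈ Submodule.span ℝ (S.L '' Set.Iic j) := by
      rw [h2]
      refine Submodule.sub_mem _ ?_ ?_
      · exact Submodule.subset_span ⟨j, Set.mem_Iic.2 le_rfl, rfl⟩
      · exact Submodule.span_mono (Set.image_mono Set.Iio_subset_Iic_self) hrmem
    have h5 := Submodule.smul_mem _ (t j)⁻¹ h4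
    rwa [smul_smul, inv_mul_cancel₀ htj, one_smul] at h5

lemma exists_rep (S : OTPSetup) (j : ℕ) :
    ∃ t : ℕ →₀ ℝ, (↑t.support ⊆ Set.Iic j) ∧
      (∀ m, innerR S.μ (lbase j) (S.L m) = (t m : ℂ)) ∧
      (lbase j = fun z => ∑ k ∈ t.support, (t k : ℂ) * S.L k z) := by
  obtain ⟨t, ht, hsum⟩ := (Finsupp.mem_span_image_iff_linearCombination ℝ).1
    (lbase_mem_spanL S j)
  rw [Finsupp.mem_supported] at ht
  have hfun : lbase j = fun z => ∑ k ∈ t.support, (t k : ℂ) * S.L k z := by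
    rw [← hsum, rep_fun]
  exact ⟨t, ht, fun m => by rw [hfun, innerR_L_rep], hfun⟩

lemma inner_lbase_L_high (S : OTPSetup) {j m : ℕ} (h : j < m) :
    innerR S.μ (lbase j) (S.L m) = 0 := by
  obtain ⟨t, ht, hinner, -⟩ := exists_rep S j
  rw [hinner m]
  have htm : t m = 0 := Finsupp.notMem_support_iff.1 fun hm =>
    absurd (ht hm) (by simp; omega)
  rw [htm]
  simp

lemma Zplus {j : ℕ} (hj : 1 ≤ j) (z : ℂ) :
    lbase (2 * j) z + Complex.I * lbase (2 * j - 1) z = z ^ j := by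
  have he : Even (2 * j) := even_two_mul j
  have ho : ¬ Even (2 * j - 1) := by
    rw [Nat.even_iff]; omega
  have h1 : 2 * j / 2 = j := by omega
  have h2 : (2 * j - 1 + 1) / 2 = j := by omega
  simp only [lbase, if_pos he, if_neg ho, h1, h2]
  generalize z⁻¹ = y
  have hI : Complex.I ≠ 0 := Complex.I_ne_zero
  field_simp
  ring

lemma Zminus {j : ℕ} (hj : 1 ≤ j) (z : ℂ) :
    lbase (2 * j) z - Complex.I * lbase (2 * j - 1) z = (z⁻¹) ^ j := by
  have he : Even (2 * j) := even_two_mul j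
  have ho : ¬ Even (2 * j - 1) := by
    rw [Nat.even_iff]; omega
  have h1 : 2 * j / 2 = j := by omega
  have h2 : (2 * j - 1 + 1) / 2 = j := by omega
  simp only [lbase, if_pos he, if_neg ho, h1, h2]
  generalize z⁻¹ = y
  have hI : Complex.I ≠ 0 := Complex.I_ne_zero
  field_simp
  ring

lemma lbase_zero_apply (z : ℂ) : lbase 0 z = 1 := by
  simp [lbase]

lemma innerC_conj_symm (μ : Measure ℝ) (f g : ℂ → ℂ) :
    innerC μ f g = (starRingEnd ℂ) (innerC μ g f) := by
  rw [innerC_cir, innerC_cir, ← integral_conj]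
  congr 1
  funext θ
  rw [map_mul, Complex.conj_conj]
  ring

lemma lbase_poly {n k : ℕ} (hn : 1 ≤ n) (hk : k ≤ 2 * n - 2) :
    ∃ Q : Polynomial ℂ, Q.natDegree ≤ 2 * n - 2 ∧
      ∀ z : ℂ, z ≠ 0 → z ^ (n - 1) * lbase k z = Q.eval z := by
  have key : ∀ (j : ℕ), j ≤ n - 1 → ∀ z : ℂ, z ≠ 0 →
      z ^ (n - 1) * (z⁻¹) ^ j = z ^ (n - 1 - j) := by
    intro j hj z hz
    rw [show n - 1 = (n - 1 - j) + j from (by omega), pow_add, mul_assoc, ← mul_pow,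
      mul_inv_cancel₀ hz, one_pow, mul_one]
    congr 1
    omega
  by_cases he : Even k
  · obtain ⟨j, hj⟩ := he
    have hj2 : k / 2 = j := by omega
    have hjn : j ≤ n - 1 := by omega
    refine ⟨(2 : ℂ)⁻¹ • (Polynomial.X ^ (n - 1 + j) + Polynomial.X ^ (n - 1 - j)), ?_, ?_⟩
    · refine le_trans (Polynomial.natDegree_smul_le _ _)
        (le_trans (Polynomial.natDegree_add_le _ _) ?_)
      simp only [Polynomial.natDegree_X_pow]
      omega
    · intro z hz
      have he' : Even k := ⟨j, hj⟩
      simp only [lbase, if_pos he', hj2]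
      rw [Polynomial.eval_smul, Polynomial.eval_add, Polynomial.eval_pow,
        Polynomial.eval_pow, Polynomial.eval_X, smul_eq_mul]
      have hkey := key j hjn z hz
      calc z ^ (n - 1) * ((z ^ j + (z⁻¹) ^ j) / 2)
          = (z ^ (n - 1) * z ^ j + z ^ (n - 1) * (z⁻¹) ^ j) / 2 := by ring
        _ = (2 : ℂ)⁻¹ * (z ^ (n - 1 + j) + z ^ (n - 1 - j)) := by
            rw [← pow_add, hkey]; ring
  · have hko : k % 2 = 1 := Nat.not_even_iff.1 he
    set j := (k + 1) / 2 with hjdef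
    have hj2 : (k + 1) / 2 = j := rfl
    have hj1 : 1 ≤ j := by omega
    have hjn : j ≤ n - 1 := by omega
    refine ⟨(2 * Complex.I : ℂ)⁻¹ • (Polynomial.X ^ (n - 1 + j) - Polynomial.X ^ (n - 1 - j)),
      ?_, ?_⟩
    · refine le_trans (Polynomial.natDegree_smul_le _ _)
        (le_trans (Polynomial.natDegree_sub_le _ _) ?_)
      simp only [Polynomial.natDegree_X_pow]
      omega
    · intro z hz
      simp only [lbase, if_neg he, hj2]
      rw [Polynomial.eval_smul, Polynomial.eval_sub, Polynomial.eval_pow,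
        Polynomial.eval_pow, Polynomial.eval_X, smul_eq_mul]
      have hkey := key j hjn z hz
      calc z ^ (n - 1) * ((z ^ j - (z⁻¹) ^ j) / (2 * Complex.I))
          = (z ^ (n - 1) * z ^ j - z ^ (n - 1) * (z⁻¹) ^ j) / (2 * Complex.I) := by ring
        _ = (2 * Complex.I : ℂ)⁻¹ * (z ^ (n - 1 + j) - z ^ (n - 1 - j)) := by
            rw [← pow_add, hkey]; ring

end OTP5
/-- Corollary 5.7: `π_n` and `σ_n` have no common zero on the unit circle. -/
theorem stmt5 (S : OTPSetup) (n : ℕ) (hn : 1 ≤ n) :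
    ¬ ∃ θ ∈ Set.Ico (0 : ℝ) (2 * Real.pi),
        S.π n (Complex.exp (θ * Complex.I)) = 0 ∧ S.σ n (Complex.exp (θ * Complex.I)) = 0 := by
  haveI := S.prob
  rintro ⟨θ₀, hθ₀, hπ0, hσ0⟩
  rw [S.π_def n hn] at hπ0
  rw [S.σ_def n hn] at hσ0
  have hπ : S.L (2 * n - 1) (OTP5.cir θ₀) = 0 := hπ0
  have hσ : S.L (2 * n) (OTP5.cir θ₀) = 0 := hσ0
  set w0 : ℂ := OTP5.cir θ₀ with hw0
  set H : ℂ → ℂ := fun z => (S.a n : ℂ) * S.L (2 * n) z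
      + ((S.β n : ℂ) + Complex.I) * (S.b n : ℂ) * S.L (2 * n - 1) z with hH
  have hBddH : OTP5.Bdd H :=
    ((OTP5.bdd_L S (2 * n)).const_mul (S.a n : ℂ)).add
      ((OTP5.bdd_L S (2 * n - 1)).const_mul (((S.β n : ℂ) + Complex.I) * (S.b n : ℂ)))
  -- orthogonality of H to low lbase's
  have hBH : ∀ j, j ≤ 2 * n - 2 →
      ∫ θ, lbase j (OTP5.cir θ) * H (OTP5.cir θ) ∂S.μ = 0 := by
    intro j hj
    have h1 : innerR S.μ (lbase j) (S.L (2 * n)) = 0 :=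
      OTP5.inner_lbase_L_high S (by omega)
    have h2 : innerR S.μ (lbase j) (S.L (2 * n - 1)) = 0 :=
      OTP5.inner_lbase_L_high S (by omega)
    have key : (fun θ : ℝ => lbase j (OTP5.cir θ) * H (OTP5.cir θ))
        = fun θ : ℝ => (S.a n : ℂ) * (lbase j (OTP5.cir θ) * S.L (2 * n) (OTP5.cir θ))
          + (((S.β n : ℂ) + Complex.I) * (S.b n : ℂ))
            * (lbase j (OTP5.cir θ) * S.L (2 * n - 1) (OTP5.cir θ)) := by
      funext θ
      simp only [hH]
      ring
    rw [key, integral_add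
        ((OTP5.integrable_mul (OTP5.bdd_lbase j) (OTP5.bdd_L S (2 * n))).const_mul _)
        ((OTP5.integrable_mul (OTP5.bdd_lbase j) (OTP5.bdd_L S (2 * n - 1))).const_mul _),
      integral_const_mul, integral_const_mul, ← OTP5.innerR_cir, ← OTP5.innerR_cir, h1, h2]
    simp
  -- orthogonality of H to z^m, |m| ≤ n-1
  have hO : ∀ m : ℤ, m.natAbs ≤ n - 1 →
      ∫ θ, (OTP5.cir θ) ^ m * H (OTP5.cir θ) ∂S.μ = 0 := by
    intro m hm
    rcases lt_trichotomy m 0 with hneg | hzero | hpos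
    · set j := m.natAbs with hjdef
      have hj1 : 1 ≤ j := by omega
      have hkey : (fun θ : ℝ => (OTP5.cir θ) ^ m * H (OTP5.cir θ))
          = fun θ : ℝ => lbase (2 * j) (OTP5.cir θ) * H (OTP5.cir θ)
            + (-Complex.I) * (lbase (2 * j - 1) (OTP5.cir θ) * H (OTP5.cir θ)) := by
        funext θ
        have hz : (OTP5.cir θ) ^ m = ((OTP5.cir θ)⁻¹) ^ j := by
          rw [show m = -(j : ℤ) from by omega, zpow_neg, zpow_natCast, inv_pow]
        rw [hz, ← OTP5.Zminus hj1]
        ring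
      rw [hkey, integral_add (OTP5.integrable_mul (OTP5.bdd_lbase _) hBddH)
          ((OTP5.integrable_mul (OTP5.bdd_lbase _) hBddH).const_mul _), integral_const_mul,
        hBH (2 * j) (by omega), hBH (2 * j - 1) (by omega)]
      simp
    · subst hzero
      have hkey : (fun θ : ℝ => (OTP5.cir θ) ^ (0 : ℤ) * H (OTP5.cir θ))
          = fun θ : ℝ => lbase 0 (OTP5.cir θ) * H (OTP5.cir θ) := by
        funext θ
        rw [zpow_zero, OTP5.lbase_zero_apply]
      rw [hkey]
      exact hBH 0 (by omega)
    · set j := m.natAbs with hjdef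
      have hj1 : 1 ≤ j := by omega
      have hkey : (fun θ : ℝ => (OTP5.cir θ) ^ m * H (OTP5.cir θ))
          = fun θ : ℝ => lbase (2 * j) (OTP5.cir θ) * H (OTP5.cir θ)
            + Complex.I * (lbase (2 * j - 1) (OTP5.cir θ) * H (OTP5.cir θ)) := by
        funext θ
        have hz : (OTP5.cir θ) ^ m = (OTP5.cir θ) ^ j := by
          rw [show m = (j : ℤ) from by omega, zpow_natCast]
        rw [hz, ← OTP5.Zplus hj1]
        ring
      rw [hkey, integral_add (OTP5.integrable_mul (OTP5.bdd_lbase _) hBddH)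
          ((OTP5.integrable_mul (OTP5.bdd_lbase _) hBddH).const_mul _), integral_const_mul,
        hBH (2 * j) (by omega), hBH (2 * j - 1) (by omega)]
      simp
  -- decomposition of lbase (2n) and lbase (2n-1) in the L basis
  obtain ⟨t, htsupp, htinner, htfun⟩ := OTP5.exists_rep S (2 * n)
  obtain ⟨t', ht'supp, ht'inner, ht'fun⟩ := OTP5.exists_rep S (2 * n - 1)
  have hta : (t (2 * n) : ℂ) = (S.a n : ℂ) :=
    (htinner (2 * n)).symm.trans (S.a_def n hn).symm
  have htb : (t (2 * n - 1) : ℂ) = ((S.β n * S.b n : ℝ) : ℂ) :=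
    (htinner (2 * n - 1)).symm.trans (S.β_def n hn).symm
  have ht'b : (t' (2 * n - 1) : ℂ) = (S.b n : ℂ) :=
    (ht'inner (2 * n - 1)).symm.trans (S.b_def n hn).symm
  set s1 : Finset ℕ := insert (2 * n) (insert (2 * n - 1) t.support) with hs1
  set s2 : Finset ℕ := insert (2 * n - 1) t'.support with hs2
  set E1 : Finset ℕ := (s1.erase (2 * n)).erase (2 * n - 1) with hE1
  set E2 : Finset ℕ := s2.erase (2 * n - 1) with hE2
  have hl1 : ∀ z, lbase (2 * n) z = (S.a n : ℂ) * S.L (2 * n) z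
      + ((S.β n : ℂ) * (S.b n : ℂ)) * S.L (2 * n - 1) z
      + (∑ k ∈ E1, (t k : ℂ) * S.L k z) := by
    intro z
    have h0 : lbase (2 * n) z = ∑ k ∈ s1, (t k : ℂ) * S.L k z := by
      rw [congrFun htfun z]
      refine Finset.sum_subset ?_ fun x _ hx => ?_
      · exact subset_trans (Finset.subset_insert _ _) (Finset.subset_insert _ _)
      · rw [Finsupp.notMem_support_iff.1 hx]
        simp
    have h2nmem : (2 * n) ∈ s1 := Finset.mem_insert_self _ _
    have h2n1mem : (2 * n - 1) ∈ s1.erase (2 * n) :=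
      Finset.mem_erase.2 ⟨by omega, Finset.mem_insert_of_mem (Finset.mem_insert_self _ _)⟩
    rw [h0, ← Finset.add_sum_erase _ _ h2nmem, ← Finset.add_sum_erase _ _ h2n1mem,
      hta, htb]
    push_cast
    ring
  have hl2 : ∀ z, lbase (2 * n - 1) z = (S.b n : ℂ) * S.L (2 * n - 1) z
      + (∑ k ∈ E2, (t' k : ℂ) * S.L k z) := by
    intro z
    have h0 : lbase (2 * n - 1) z = ∑ k ∈ s2, (t' k : ℂ) * S.L k z := by
      rw [congrFun ht'fun z]
      refine Finset.sum_subset (Finset.subset_insert _ _) fun x _ hx => ?_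
      rw [Finsupp.notMem_support_iff.1 hx]
      simp
    have hmem : (2 * n - 1) ∈ s2 := Finset.mem_insert_self _ _
    rw [h0, ← Finset.add_sum_erase _ _ hmem, ht'b]
  -- membership of the remainder sums
  have hw1mem : (fun z => ∑ k ∈ E1, (t k : ℂ) * S.L k z)
      ∈ Submodule.span ℝ (S.L '' Set.Iic (2 * n - 2)) := by
    have heq : (fun z => ∑ k ∈ E1, (t k : ℂ) * S.L k z) = ∑ k ∈ E1, t k • S.L k := by
      funext z
      rw [Finset.sum_apply]
      exact Finset.sum_congr rfl fun k _ => by rw [Pi.smul_apply, Complex.real_smul]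
    rw [heq]
    refine Submodule.sum_mem _ fun k hk => Submodule.smul_mem _ _ (Submodule.subset_span ?_)
    refine ⟨k, ?_, rfl⟩
    simp only [hE1, hs1, Finset.mem_erase, Finset.mem_insert] at hk
    obtain ⟨hk1, hk2, hk3⟩ := hk
    rcases hk3 with h | h | h
    · omega
    · omega
    · have := htsupp h
      simp only [Set.mem_Iic] at this ⊢
      omega
  have hw2mem : (fun z => ∑ k ∈ E2, (t' k : ℂ) * S.L k z)
      ∈ Submodule.span ℝ (S.L '' Set.Iic (2 * n - 2)) := by
    have heq : (fun z => ∑ k ∈ E2, (t' k : ℂ) * S.L k z) = ∑ k ∈ E2, t' k • S.L k := by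
      funext z
      rw [Finset.sum_apply]
      exact Finset.sum_congr rfl fun k _ => by rw [Pi.smul_apply, Complex.real_smul]
    rw [heq]
    refine Submodule.sum_mem _ fun k hk => Submodule.smul_mem _ _ (Submodule.subset_span ?_)
    refine ⟨k, ?_, rfl⟩
    simp only [hE2, hs2, Finset.mem_erase, Finset.mem_insert] at hk
    obtain ⟨hk1, hk2⟩ := hk
    rcases hk2 with h | h
    · omega
    · have := ht'supp h
      simp only [Set.mem_Iic] at this ⊢
      omega
  -- z^n - H z is the low-degree remainder
  have hu_eq : ∀ z : ℂ, z ^ n - H z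
      = (∑ k ∈ E1, (t k : ℂ) * S.L k z) + Complex.I * (∑ k ∈ E2, (t' k : ℂ) * S.L k z) := by
    intro z
    have hz := OTP5.Zplus hn z
    rw [← hz, hl1 z, hl2 z]
    simp only [hH]
    push_cast
    ring
  -- scalar extension
  have hRC : ∀ f : ℂ → ℂ, f ∈ Submodule.span ℝ (S.L '' Set.Iic (2 * n - 2)) →
      f ∈ Submodule.span ℂ (lbase '' Set.Iic (2 * n - 2)) := by
    intro f hf
    have step1 : Submodule.span ℝ (S.L '' Set.Iic (2 * n - 2))
        ≤ (Submodule.span ℂ (lbase '' Set.Iic (2 * n - 2))).restrictScalars ℝ := by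
      rw [Submodule.span_le]
      rintro g ⟨k, hk, rfl⟩
      have step2 : Submodule.span ℝ (lbase '' Set.Iic k)
          ≤ (Submodule.span ℂ (lbase '' Set.Iic (2 * n - 2))).restrictScalars ℝ := by
        rw [Submodule.span_le]
        rintro g' ⟨k', hk', rfl⟩
        exact Submodule.subset_span
          ⟨k', Set.mem_Iic.2 (le_trans (Set.mem_Iic.1 hk') (Set.mem_Iic.1 hk)), rfl⟩
      exact step2 (S.mem_span k)
    exact step1 hf
  have hgmem : (fun z => (∑ k ∈ E1, (t k : ℂ) * S.L k z)
      + Complex.I * (∑ k ∈ E2, (t' k : ℂ) * S.L k z))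
      ∈ Submodule.span ℂ (lbase '' Set.Iic (2 * n - 2)) := by
    have heq : (fun z => (∑ k ∈ E1, (t k : ℂ) * S.L k z)
        + Complex.I * (∑ k ∈ E2, (t' k : ℂ) * S.L k z))
        = (fun z => ∑ k ∈ E1, (t k : ℂ) * S.L k z)
          + Complex.I • (fun z => ∑ k ∈ E2, (t' k : ℂ) * S.L k z) := by
      funext z
      simp [smul_eq_mul]
    rw [heq]
    exact Submodule.add_mem _ (hRC _ hw1mem)
      (Submodule.smul_mem _ Complex.I (hRC _ hw2mem))
  -- the polynomial Q
  have hQex : ∃ Q : Polynomial ℂ, Q.natDegree ≤ 2 * n - 2 ∧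
      ∀ z : ℂ, z ≠ 0 → z ^ (n - 1) * ((∑ k ∈ E1, (t k : ℂ) * S.L k z)
        + Complex.I * (∑ k ∈ E2, (t' k : ℂ) * S.L k z)) = Q.eval z := by
    refine Submodule.span_induction (p := fun f _ => ∃ Q : Polynomial ℂ,
      Q.natDegree ≤ 2 * n - 2 ∧ ∀ z : ℂ, z ≠ 0 → z ^ (n - 1) * f z = Q.eval z)
      ?_ ?_ ?_ ?_ hgmem
    · rintro g ⟨k, hk, rfl⟩
      exact OTP5.lbase_poly hn hk
    · exact ⟨0, by simp, fun z hz => by simp⟩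
    · rintro x y _ _ ⟨Q1, h1, e1⟩ ⟨Q2, h2, e2⟩
      refine ⟨Q1 + Q2, le_trans (Polynomial.natDegree_add_le _ _) (max_le h1 h2),
        fun z hz => ?_⟩
      rw [Polynomial.eval_add, ← e1 z hz, ← e2 z hz, Pi.add_apply]
      ring
    · rintro c x _ ⟨Q1, h1, e1⟩
      refine ⟨c • Q1, le_trans (Polynomial.natDegree_smul_le _ _) h1, fun z hz => ?_⟩
      rw [Polynomial.eval_smul, ← e1 z hz, Pi.smul_apply, smul_eq_mul, smul_eq_mul]
      ring
  obtain ⟨Q, hQdeg, hQev⟩ := hQex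
  -- the monic polynomial P = X^(2n-1) - Q, with P(z) = z^(n-1) H(z) on the circle
  set P : Polynomial ℂ := Polynomial.X ^ (2 * n - 1) - Q with hPdef
  have hPmonic : P.Monic := by
    refine Polynomial.monic_X_pow_sub ?_
    calc Q.degree ≤ (Q.natDegree : WithBot ℕ) := Polynomial.degree_le_natDegree
      _ < ((2 * n - 1 : ℕ) : WithBot ℕ) := by
          exact_mod_cast (by omega : Q.natDegree < 2 * n - 1)
  have hPdeg2 : P.natDegree = 2 * n - 1 := by
    rw [hPdef, Polynomial.natDegree_sub_eq_left_of_natDegree_lt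
      (by rw [Polynomial.natDegree_X_pow]; omega), Polynomial.natDegree_X_pow]
  have hPev : ∀ z : ℂ, z ≠ 0 → P.eval z = z ^ (n - 1) * H z := by
    intro z hz
    have h1 : z ^ (n - 1) * (z ^ n - H z) = Q.eval z := by
      rw [hu_eq z]
      exact hQev z hz
    have h2 : z ^ (n - 1) * z ^ n = z ^ (2 * n - 1) := by
      rw [← pow_add]
      congr 1
      omega
    rw [hPdef, Polynomial.eval_sub, Polynomial.eval_pow, Polynomial.eval_X, ← h1]
    calc z ^ (2 * n - 1) - z ^ (n - 1) * (z ^ n - H z)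
        = z ^ (2 * n - 1) - z ^ (n - 1) * z ^ n + z ^ (n - 1) * H z := by ring
      _ = z ^ (n - 1) * H z := by rw [h2]; ring
  -- w0 is a root of P
  have hH0 : H w0 = 0 := by
    simp only [hH, hπ, hσ]
    simp
  have hroot : P.IsRoot w0 := by
    show P.eval w0 = 0
    rw [hPev w0 (OTP5.cir_ne_zero θ₀), hH0, mul_zero]
  obtain ⟨q, hq⟩ := Polynomial.dvd_iff_isRoot.2 hroot
  have hq0 : q ≠ 0 := by
    intro h
    rw [h, mul_zero] at hq
    exact hPmonic.ne_zero hq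
  have hqdeg : q.natDegree ≤ 2 * n - 2 := by
    have hX : (Polynomial.X - Polynomial.C w0) ≠ 0 := Polynomial.X_sub_C_ne_zero w0
    have hmul := Polynomial.natDegree_mul hX hq0
    rw [← hq, hPdeg2, Polynomial.natDegree_X_sub_C] at hmul
    omega
  -- orthogonality of P against low powers
  have hOrth : ∀ k : ℕ, k ≤ 2 * n - 2 →
      ∫ θ, ((OTP5.cir θ)⁻¹) ^ k * P.eval (OTP5.cir θ) ∂S.μ = 0 := by
    intro k hk
    have hm : (-(k : ℤ) + ((n - 1 : ℕ) : ℤ)).natAbs ≤ n - 1 := by omega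
    have hkey : (fun θ : ℝ => ((OTP5.cir θ)⁻¹) ^ k * P.eval (OTP5.cir θ))
        = fun θ : ℝ => (OTP5.cir θ) ^ (-(k : ℤ) + ((n - 1 : ℕ) : ℤ)) * H (OTP5.cir θ) := by
      funext θ
      rw [hPev _ (OTP5.cir_ne_zero θ), zpow_add₀ (OTP5.cir_ne_zero θ), zpow_neg,
        zpow_natCast, zpow_natCast, inv_pow]
      ring
    rw [hkey]
    exact hO _ hm
  have hdegq : q.natDegree < 2 * n - 1 := by omega
  have hqP' : ∫ θ, (starRingEnd ℂ) (q.eval (OTP5.cir θ)) * P.eval (OTP5.cir θ) ∂S.μ = 0 := by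
    have hrew : (fun θ : ℝ => (starRingEnd ℂ) (q.eval (OTP5.cir θ)) * P.eval (OTP5.cir θ))
        = fun θ : ℝ => ∑ k ∈ Finset.range (2 * n - 1),
            (starRingEnd ℂ) (q.coeff k) * (((OTP5.cir θ)⁻¹) ^ k * P.eval (OTP5.cir θ)) := by
      funext θ
      rw [Polynomial.eval_eq_sum_range' hdegq, map_sum, Finset.sum_mul]
      refine Finset.sum_congr rfl fun k _ => ?_
      rw [map_mul, map_pow, OTP5.conj_cir]
      ring
    rw [hrew, integral_finset_sum _ fun k _ =>
        ((OTP5.integrable_mul (OTP5.bdd_inv_pow k) (OTP5.bdd_polyeval P)).const_mul _)]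
    refine Finset.sum_eq_zero fun k hk => ?_
    rw [integral_const_mul, hOrth k (by simp only [Finset.mem_range] at hk; omega), mul_zero]
  have hPq' : ∫ θ, (starRingEnd ℂ) (P.eval (OTP5.cir θ)) * q.eval (OTP5.cir θ) ∂S.μ = 0 := by
    have hrew : (fun θ : ℝ => (starRingEnd ℂ) (P.eval (OTP5.cir θ)) * q.eval (OTP5.cir θ))
        = fun θ : ℝ => (starRingEnd ℂ)
            ((starRingEnd ℂ) (q.eval (OTP5.cir θ)) * P.eval (OTP5.cir θ)) := by
      funext θ
      rw [map_mul, Complex.conj_conj]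
      ring
    rw [hrew, integral_conj, hqP', map_zero]
  -- the Simon argument
  have hzq : ∀ θ : ℝ, OTP5.cir θ * q.eval (OTP5.cir θ)
      = P.eval (OTP5.cir θ) + w0 * q.eval (OTP5.cir θ) := by
    intro θ
    rw [hq, Polynomial.eval_mul, Polynomial.eval_sub, Polynomial.eval_X, Polynomial.eval_C]
    ring
  have hE1' : ∫ θ, (starRingEnd ℂ) (OTP5.cir θ * q.eval (OTP5.cir θ))
        * (OTP5.cir θ * q.eval (OTP5.cir θ)) ∂S.μ
      = ∫ θ, (starRingEnd ℂ) (q.eval (OTP5.cir θ)) * q.eval (OTP5.cir θ) ∂S.μ := by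
    congr 1
    funext θ
    rw [map_mul]
    calc (starRingEnd ℂ) (OTP5.cir θ) * (starRingEnd ℂ) (q.eval (OTP5.cir θ))
          * (OTP5.cir θ * q.eval (OTP5.cir θ))
        = ((starRingEnd ℂ) (OTP5.cir θ) * OTP5.cir θ)
          * ((starRingEnd ℂ) (q.eval (OTP5.cir θ)) * q.eval (OTP5.cir θ)) := by ring
      _ = _ := by rw [OTP5.conj_mul_cir, one_mul]
  have hE2' : ∫ θ, (starRingEnd ℂ) (OTP5.cir θ * q.eval (OTP5.cir θ))
        * (OTP5.cir θ * q.eval (OTP5.cir θ)) ∂S.μ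
      = (∫ θ, (starRingEnd ℂ) (P.eval (OTP5.cir θ)) * P.eval (OTP5.cir θ) ∂S.μ)
        + (((starRingEnd ℂ) w0) * (∫ θ, (starRingEnd ℂ) (q.eval (OTP5.cir θ)) * P.eval (OTP5.cir θ) ∂S.μ)
          + (w0 * (∫ θ, (starRingEnd ℂ) (P.eval (OTP5.cir θ)) * q.eval (OTP5.cir θ) ∂S.μ)
            + (((starRingEnd ℂ) w0 * w0) * (∫ θ, (starRingEnd ℂ) (q.eval (OTP5.cir θ)) * q.eval (OTP5.cir θ) ∂S.μ)))) := by
    have hrew : (fun θ : ℝ => (starRingEnd ℂ) (OTP5.cir θ * q.eval (OTP5.cir θ))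
          * (OTP5.cir θ * q.eval (OTP5.cir θ)))
        = fun θ : ℝ => (starRingEnd ℂ) (P.eval (OTP5.cir θ)) * P.eval (OTP5.cir θ)
          + (((starRingEnd ℂ) w0) * ((starRingEnd ℂ) (q.eval (OTP5.cir θ)) * P.eval (OTP5.cir θ))
            + (w0 * ((starRingEnd ℂ) (P.eval (OTP5.cir θ)) * q.eval (OTP5.cir θ))
              + ((starRingEnd ℂ) w0 * w0) * ((starRingEnd ℂ) (q.eval (OTP5.cir θ)) * q.eval (OTP5.cir θ)))) := by
      funext θ
      rw [hzq θ, map_add, map_mul]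
      ring
    have iPP := OTP5.integrable_mul (μ := S.μ) (OTP5.bdd_conj (OTP5.bdd_polyeval P)) (OTP5.bdd_polyeval P)
    have iqP := OTP5.integrable_mul (μ := S.μ) (OTP5.bdd_conj (OTP5.bdd_polyeval q)) (OTP5.bdd_polyeval P)
    have iPq := OTP5.integrable_mul (μ := S.μ) (OTP5.bdd_conj (OTP5.bdd_polyeval P)) (OTP5.bdd_polyeval q)
    have iqq := OTP5.integrable_mul (μ := S.μ) (OTP5.bdd_conj (OTP5.bdd_polyeval q)) (OTP5.bdd_polyeval q)
    have i1 : Integrable (fun θ : ℝ => (starRingEnd ℂ) (P.eval (OTP5.cir θ)) * P.eval (OTP5.cir θ)) S.μ := iPP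
    have i2 : Integrable (fun θ : ℝ => ((starRingEnd ℂ) w0)
        * ((starRingEnd ℂ) (q.eval (OTP5.cir θ)) * P.eval (OTP5.cir θ))) S.μ := iqP.const_mul _
    have i3 : Integrable (fun θ : ℝ => w0
        * ((starRingEnd ℂ) (P.eval (OTP5.cir θ)) * q.eval (OTP5.cir θ))) S.μ := iPq.const_mul _
    have i4 : Integrable (fun θ : ℝ => ((starRingEnd ℂ) w0 * w0)
        * ((starRingEnd ℂ) (q.eval (OTP5.cir θ)) * q.eval (OTP5.cir θ))) S.μ := iqq.const_mul _
    have i34 : Integrable (fun θ : ℝ => w0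
        * ((starRingEnd ℂ) (P.eval (OTP5.cir θ)) * q.eval (OTP5.cir θ))
        + ((starRingEnd ℂ) w0 * w0)
        * ((starRingEnd ℂ) (q.eval (OTP5.cir θ)) * q.eval (OTP5.cir θ))) S.μ := i3.add i4
    have i234 : Integrable (fun θ : ℝ => ((starRingEnd ℂ) w0)
        * ((starRingEnd ℂ) (q.eval (OTP5.cir θ)) * P.eval (OTP5.cir θ))
        + (w0 * ((starRingEnd ℂ) (P.eval (OTP5.cir θ)) * q.eval (OTP5.cir θ))
          + ((starRingEnd ℂ) w0 * w0)
          * ((starRingEnd ℂ) (q.eval (OTP5.cir θ)) * q.eval (OTP5.cir θ)))) S.μ := i2.add i34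
    rw [hrew, integral_add i1 i234, integral_add i2 i34, integral_add i3 i4,
      integral_const_mul, integral_const_mul, integral_const_mul]
  have hcw : (starRingEnd ℂ) w0 * w0 = 1 := OTP5.conj_mul_cir θ₀
  have hPP : ∫ θ, (starRingEnd ℂ) (P.eval (OTP5.cir θ)) * P.eval (OTP5.cir θ) ∂S.μ = 0 := by
    have h2 := hE2'.symm.trans hE1'
    rw [hqP', hPq', hcw, mul_zero, mul_zero, one_mul, zero_add, zero_add] at h2
    linear_combination h2
  have hinner : innerC S.μ (fun z => P.eval z) (fun z => P.eval z) = 0 := hPP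
  have hP0 := S.nontriv P hinner
  exact hPmonic.ne_zero hP0
end
end

section
/- With the notation above, the reversed polynomial of Φ_{2n−1} satisfies Φ*_{2n−1}(z) = zⁿ [a_n σ_n(z) + (β_n − i) b_n π_n(z)] for all z ∈ ℂ∖{0} and n ≥ 1. -/
open MeasureTheory Complex Polynomial

noncomputable section

/-! ### Auxiliary machinery for the proof -/

namespace OTPAux

open Submodule

def circ (θ : ℝ) : ℂ := Complex.exp (θ * Complex.I)

lemma circ_ne (θ : ℝ) : circ θ ≠ 0 := Complex.exp_ne_zero _

lemma circ_mem (θ : ℝ) : circ θ ∈ ({0}ᶜ : Set ℂ) := by simp [circ_ne θ]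

lemma norm_circ (θ : ℝ) : ‖circ θ‖ = 1 := Complex.norm_exp_ofReal_mul_I θ

lemma conj_circ (θ : ℝ) : (starRingEnd ℂ) (circ θ) = (circ θ)⁻¹ := by
  rw [circ, ← Complex.exp_conj, ← Complex.exp_neg]
  congr 1
  simp [map_mul, Complex.conj_I, Complex.conj_ofReal]

lemma cont_circ : Continuous circ :=
  Complex.continuous_exp.comp (Complex.continuous_ofReal.mul continuous_const)

lemma integrable_comp (μ : Measure ℝ) [IsFiniteMeasure μ] {f : ℂ → ℂ}
    (hf : ContinuousOn f ({0}ᶜ : Set ℂ)) : Integrable (fun θ => f (circ θ)) μ := by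
  have hc : Continuous fun θ => f (circ θ) := hf.comp_continuous cont_circ circ_mem
  obtain ⟨C, hC⟩ := (isCompact_sphere (0:ℂ) 1).exists_bound_of_continuousOn
    (hf.mono (fun x hx => by
      simp only [Set.mem_compl_iff, Set.mem_singleton_iff]
      intro h; rw [h] at hx; simp at hx))
  exact (integrable_const C).mono' hc.aestronglyMeasurable
    (Filter.Eventually.of_forall fun θ => hC _ (by simpa [mem_sphere_zero_iff_norm] using norm_circ θ))

lemma integrable_mul (μ : Measure ℝ) [IsFiniteMeasure μ] {f g : ℂ → ℂ}
    (hf : ContinuousOn f ({0}ᶜ : Set ℂ)) (hg : ContinuousOn g ({0}ᶜ : Set ℂ)) :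
    Integrable (fun θ => f (circ θ) * g (circ θ)) μ :=
  integrable_comp μ (hf.mul hg)

lemma lbase_even (k : ℕ) : lbase (2*k) = fun z => (z ^ k + (z⁻¹) ^ k) / 2 := by
  funext z; simp [lbase, Nat.mul_div_cancel_left, even_two_mul]

lemma lbase_odd (k : ℕ) : lbase (2*k+1) = fun z => (z ^ (k+1) - (z⁻¹) ^ (k+1)) / (2*Complex.I) := by
  funext z
  have h1 : ¬ Even (2*k+1) := by simp [Nat.even_add_one, even_two_mul]
  have h2 : (2*k+1+1)/2 = k+1 := by omega
  simp [lbase, h1, h2]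

lemma contOn_lbase (k : ℕ) : ContinuousOn (lbase k) ({0}ᶜ : Set ℂ) := by
  rcases Nat.even_or_odd k with ⟨m, hm⟩ | ⟨m, hm⟩
  · rw [show k = 2*m by omega, lbase_even]
    exact (((continuous_pow m).continuousOn).add ((continuousOn_inv₀).pow m)).div_const 2
  · rw [show k = 2*m+1 by omega, lbase_odd]
    exact (((continuous_pow (m+1)).continuousOn).sub ((continuousOn_inv₀).pow (m+1))).div_const _

lemma contOn_span {K : Type*} [Semiring K] [Module K ℂ] [ContinuousConstSMul K ℂ]
    {s : Set (ℂ → ℂ)} (hs : ∀ f ∈ s, ContinuousOn f ({0}ᶜ : Set ℂ)) {f : ℂ → ℂ}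
    (hf : f ∈ span K s) : ContinuousOn f ({0}ᶜ : Set ℂ) := by
  induction hf using span_induction with
  | mem x h => exact hs x h
  | zero => exact continuousOn_const
  | add x y _ _ hx hy => exact hx.add hy
  | smul c x _ hx => exact hx.const_smul c

lemma pair_zero_spanC (μ : Measure ℝ) [IsFiniteMeasure μ] {g : ℂ → ℂ}
    (hg : ContinuousOn g ({0}ᶜ : Set ℂ)) {s : Set (ℂ → ℂ)}
    (hs : ∀ f ∈ s, ContinuousOn f ({0}ᶜ : Set ℂ))
    (hz : ∀ f ∈ s, ∫ θ, f (circ θ) * g (circ θ) ∂μ = 0)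
    {f : ℂ → ℂ} (hf : f ∈ span ℂ s) : ∫ θ, f (circ θ) * g (circ θ) ∂μ = 0 := by
  induction hf using span_induction with
  | mem x h => exact hz x h
  | zero => simp
  | add x y hx hy ihx ihy =>
      simp only [Pi.add_apply, add_mul]
      rw [integral_add (integrable_mul μ (contOn_span hs hx) hg)
        (integrable_mul μ (contOn_span hs hy) hg), ihx, ihy, add_zero]
  | smul c x hx ihx =>
      simp only [Pi.smul_apply, smul_eq_mul, mul_assoc]
      rw [integral_const_mul, ihx, mul_zero]

lemma em_pos (k : ℕ) (hk : 1 ≤ k) :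
    (fun z : ℂ => z ^ (k:ℤ)) = lbase (2*k) + Complex.I • lbase (2*k-1) := by
  have h : 2*k-1 = 2*(k-1)+1 := by omega
  have h2 : k - 1 + 1 = k := by omega
  funext z
  simp only [h, lbase_even, lbase_odd, h2, Pi.add_apply, Pi.smul_apply, smul_eq_mul,
    zpow_natCast]
  field_simp
  ring

lemma em_neg (k : ℕ) (hk : 1 ≤ k) :
    (fun z : ℂ => z ^ (-(k:ℤ))) = lbase (2*k) - Complex.I • lbase (2*k-1) := by
  have h : 2*k-1 = 2*(k-1)+1 := by omega
  have h2 : k - 1 + 1 = k := by omega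
  funext z
  simp only [h, lbase_even, lbase_odd, h2, Pi.sub_apply, Pi.smul_apply, smul_eq_mul,
    zpow_neg, zpow_natCast, ← inv_pow]
  field_simp
  ring

lemma em_zero : (fun z : ℂ => z ^ (0:ℤ)) = lbase 0 := by
  funext z; simp [lbase]

lemma em_mem (m : ℤ) (K : ℕ) (hm : m.natAbs ≤ K) :
    (fun z : ℂ => z ^ m) ∈ span ℂ (lbase '' Set.Iic (2*K)) := by
  rcases lt_trichotomy m 0 with hlt | rfl | hgt
  · have hk : 1 ≤ m.natAbs := by omega
    have : m = -(m.natAbs : ℤ) := by omega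
    rw [this, em_neg _ hk]
    exact sub_mem (subset_span ⟨2*m.natAbs, by simpa using by omega, rfl⟩)
      (smul_mem _ _ (subset_span ⟨2*m.natAbs-1, by simpa using by omega, rfl⟩))
  · rw [em_zero]
    exact subset_span ⟨0, by simp, rfl⟩
  · have hk : 1 ≤ m.toNat := by omega
    have : m = (m.toNat : ℤ) := by omega
    rw [this, em_pos _ hk]
    exact add_mem (subset_span ⟨2*m.toNat, by simpa using by omega, rfl⟩)
      (smul_mem _ _ (subset_span ⟨2*m.toNat-1, by simpa using by omega, rfl⟩))

lemma reverse_eval {p : Polynomial ℂ} {z : ℂ} (hz : z ≠ 0) :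
    p.reverse.eval z = z ^ p.natDegree * p.eval z⁻¹ := by
  rw [Polynomial.eval_eq_sum_range' (lt_of_le_of_lt p.reverse_natDegree_le (Nat.lt_succ_self _)),
    Polynomial.eval_eq_sum_range (x := z⁻¹), Finset.mul_sum, ← Finset.sum_range_reflect]
  refine Finset.sum_congr rfl (fun k hk => ?_)
  have hkN : k ≤ p.natDegree := by
    have := Finset.mem_range.mp hk; omega
  have h1 : p.natDegree.succ - 1 - k = p.natDegree - k := by omega
  rw [h1, Polynomial.coeff_reverse, Polynomial.revAt_le (by omega : p.natDegree - k ≤ p.natDegree)]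
  have h2 : p.natDegree - (p.natDegree - k) = k := by omega
  rw [h2, inv_pow, pow_sub₀ z hz hkN]
  ring

lemma conj_eval (p : Polynomial ℂ) (x : ℂ) :
    (p.map (starRingEnd ℂ)).eval x = (starRingEnd ℂ) (p.eval ((starRingEnd ℂ) x)) := by
  conv_lhs => rw [show x = (starRingEnd ℂ) ((starRingEnd ℂ) x) from (Complex.conj_conj x).symm]
  rw [Polynomial.eval_map, Polynomial.eval₂_at_apply]

lemma conj_reflect_lbase (k : ℕ) (z : ℂ) :
    (starRingEnd ℂ) (lbase k (((starRingEnd ℂ) z)⁻¹)) = lbase k z := by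
  have hw : ((starRingEnd ℂ) z)⁻¹⁻¹ = (starRingEnd ℂ) z := inv_inv _
  rcases Nat.even_or_odd k with ⟨m, hm⟩ | ⟨m, hm⟩
  · rw [show k = 2*m by omega, lbase_even]
    simp only [hw, map_div₀, map_add, map_pow, map_inv₀, Complex.conj_conj, map_ofNat]
    ring
  · rw [show k = 2*m+1 by omega, lbase_odd]
    simp only [hw, map_div₀, map_sub, map_pow, map_inv₀, Complex.conj_conj, map_mul,
      map_ofNat, Complex.conj_I]
    rw [div_eq_div_iff (by simp [Complex.I_ne_zero]) (by simp [Complex.I_ne_zero])]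
    ring

lemma conj_reflect_span {m : ℕ} {f : ℂ → ℂ}
    (hf : f ∈ span ℝ (lbase '' Set.Iic m)) (z : ℂ) :
    (starRingEnd ℂ) (f (((starRingEnd ℂ) z)⁻¹)) = f z := by
  induction hf using span_induction with
  | mem x hx =>
      obtain ⟨k, -, rfl⟩ := hx
      exact conj_reflect_lbase k z
  | zero => simp
  | add x y _ _ hx hy => simp only [Pi.add_apply, map_add, hx, hy]
  | smul c x _ hx =>
      simp only [Pi.smul_apply, Complex.real_smul, map_mul, Complex.conj_ofReal, hx]

end OTPAux
namespace OTPAux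

open Submodule

lemma contOn_sum {ι : Type*} (t : Finset ι) (f : ι → ℂ → ℂ)
    (h : ∀ i ∈ t, ContinuousOn (f i) ({0}ᶜ : Set ℂ)) :
    ContinuousOn (fun z => ∑ i ∈ t, f i z) ({0}ᶜ : Set ℂ) := by
  classical
  induction t using Finset.induction_on with
  | empty => simpa using continuousOn_const
  | insert _ _ hx ih =>
      simp only [Finset.sum_insert hx]
      exact (h _ (Finset.mem_insert_self _ _)).add
        (ih fun i hi => h i (Finset.mem_insert_of_mem hi))

lemma innerR_circ (μ : Measure ℝ) (f g : ℂ → ℂ) :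
    innerR μ f g = ∫ θ, f (circ θ) * g (circ θ) ∂μ := rfl

lemma contOn_L (S : OTPSetup) (i : ℕ) : ContinuousOn (S.L i) ({0}ᶜ : Set ℂ) :=
  contOn_span (fun f hf => by obtain ⟨k, -, rfl⟩ := hf; exact contOn_lbase k) (S.mem_span i)

lemma pair_L_sum (S : OTPSetup) (m : ℕ) (d : Fin (m+1) → ℂ) (i : Fin (m+1)) :
    ∫ θ, S.L i (circ θ) * (∑ j : Fin (m+1), d j • S.L (j:ℕ)) (circ θ) ∂S.μ = d i := by
  haveI := S.prob
  have hrw : (fun θ => S.L i (circ θ) * (∑ j : Fin (m+1), d j • S.L (j:ℕ)) (circ θ))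
      = fun θ => ∑ j : Fin (m+1), d j * (S.L i (circ θ) * S.L (j:ℕ) (circ θ)) := by
    funext θ
    simp only [Finset.sum_apply, Pi.smul_apply, smul_eq_mul, Finset.mul_sum]
    exact Finset.sum_congr rfl fun j _ => by ring
  rw [hrw]
  rw [MeasureTheory.integral_finset_sum (μ := S.μ) Finset.univ
    (f := fun (j : Fin (m+1)) (θ : ℝ) => d j * (S.L (i:ℕ) (circ θ) * S.L (j:ℕ) (circ θ)))
    (fun j _ => ((integrable_mul S.μ (contOn_L S i) (contOn_L S (j:ℕ)))).const_mul (d j))]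
  have hj : ∀ j : Fin (m+1), ∫ θ, d j * (S.L i (circ θ) * S.L (j:ℕ) (circ θ)) ∂S.μ
      = d j * (if (i:ℕ) = (j:ℕ) then 1 else 0) := fun j => by
    rw [integral_const_mul]
    congr 1
    exact S.orthonormal i j
  rw [Finset.sum_congr rfl fun j _ => hj j]
  simp [Fin.val_eq_val, mul_ite]

lemma indepL (S : OTPSetup) (m : ℕ) :
    LinearIndependent ℂ (fun i : Fin (m+1) => S.L (i:ℕ)) := by
  rw [Fintype.linearIndependent_iff]
  intro g hg i
  have h0 : ∫ θ, S.L i (circ θ) * (∑ j : Fin (m+1), g j • S.L (j:ℕ)) (circ θ) ∂S.μ = 0 := by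
    rw [hg]
    simp
  rw [pair_L_sum S m g i] at h0
  exact h0

lemma image_eq_range (S : OTPSetup) (m : ℕ) :
    S.L '' Set.Iic m = Set.range (fun i : Fin (m+1) => S.L (i:ℕ)) := by
  ext f
  constructor
  · rintro ⟨k, hk, rfl⟩
    exact ⟨⟨k, Nat.lt_succ_of_le hk⟩, rfl⟩
  · rintro ⟨i, rfl⟩
    exact ⟨(i:ℕ), Nat.lt_succ_iff.mp i.2, rfl⟩

lemma span_eq (S : OTPSetup) (m : ℕ) :
    span ℂ (lbase '' Set.Iic m) = span ℂ (S.L '' Set.Iic m) := by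
  classical
  have hle : span ℂ (S.L '' Set.Iic m) ≤ span ℂ (lbase '' Set.Iic m) := by
    rw [span_le]
    rintro f ⟨k, hk, rfl⟩
    exact span_subset_span ℝ ℂ _
      (span_mono (Set.image_mono (Set.Iic_subset_Iic.mpr hk)) (S.mem_span k))
  have hcoe : (((Finset.Iic m).image lbase : Finset (ℂ → ℂ)) : Set (ℂ → ℂ))
      = lbase '' Set.Iic m := by
    simp
  haveI : FiniteDimensional ℂ (span ℂ (lbase '' Set.Iic m)) := by
    rw [← hcoe]
    exact FiniteDimensional.span_of_finite ℂ (Finset.finite_toSet _)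
  have h1 : Module.finrank ℂ (span ℂ (lbase '' Set.Iic m)) ≤ m + 1 := by
    rw [← hcoe]
    exact le_trans (finrank_span_finset_le_card _)
      (le_trans Finset.card_image_le (by simp [Nat.card_Iic]))
  have h2 : Module.finrank ℂ (span ℂ (S.L '' Set.Iic m)) = m + 1 := by
    rw [image_eq_range, finrank_span_eq_card (indepL S m), Fintype.card_fin]
  exact (Submodule.eq_of_le_of_finrank_le hle (by rw [h2]; exact h1)).symm

lemma keyM (S : OTPSetup) (m k : ℕ) (hk : k < m) :
    ∫ θ, (circ θ) ^ (-(k:ℤ)) * (S.Φ m).eval (circ θ) ∂S.μ = 0 := by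
  have h := S.Φ_orth m k hk
  have hp : ∀ θ : ℝ, (circ θ) ^ (-(k:ℤ)) = (starRingEnd ℂ) ((circ θ)^k) := fun θ => by
    rw [map_pow, conj_circ, zpow_neg, zpow_natCast, inv_pow]
  calc ∫ θ, (circ θ) ^ (-(k:ℤ)) * (S.Φ m).eval (circ θ) ∂S.μ
      = innerC S.μ (fun z => z^k) (fun z => (S.Φ m).eval z) := by
        unfold innerC
        congr 1
        funext θ
        rw [hp θ]
        rfl
    _ = 0 := h

end OTPAux
namespace OTPAux

open Submodule

lemma integrable_zpow_mul (μ : Measure ℝ) [IsFiniteMeasure μ] (m : ℤ) {g : ℂ → ℂ}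
    (hg : ContinuousOn g ({0}ᶜ : Set ℂ)) :
    Integrable (fun θ => (circ θ)^m * g (circ θ)) μ :=
  integrable_mul μ (continuousOn_zpow₀ m) hg

def hPhi (S : OTPSetup) (n : ℕ) : ℂ → ℂ :=
  fun z => ∑ k ∈ Finset.range (2*n), (S.Φ (2*n-1)).coeff k * z ^ ((k:ℤ) + 1 - n)

lemma hPhi_eq (S : OTPSetup) (n : ℕ) (hn : 1 ≤ n) {z : ℂ} (hz : z ≠ 0) :
    hPhi S n z = z ^ ((1:ℤ) - n) * (S.Φ (2*n-1)).eval z := by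
  rw [Polynomial.eval_eq_sum_range, S.Φ_deg, show 2*n-1+1 = 2*n by omega, Finset.mul_sum]
  unfold hPhi
  exact Finset.sum_congr rfl fun k _ => by
    rw [show ((k:ℤ)+1-(n:ℤ)) = (1 - n) + (k:ℤ) by ring, zpow_add₀ hz, zpow_natCast]
    ring

lemma contOn_hPhi (S : OTPSetup) (n : ℕ) : ContinuousOn (hPhi S n) ({0}ᶜ : Set ℂ) :=
  contOn_sum _ _ (fun k _ => continuousOn_const.mul (continuousOn_zpow₀ _))

lemma IA (S : OTPSetup) (n : ℕ) (hn : 1 ≤ n) (j : ℤ)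
    (h1 : -((n:ℤ)-1) ≤ j) (h2 : j ≤ (n:ℤ)-1) :
    ∫ θ, (circ θ) ^ j * hPhi S n (circ θ) ∂S.μ = 0 := by
  have hk : (((n:ℤ) - 1 - j).toNat) < 2*n-1 := by omega
  have hptw : ∀ θ : ℝ, (circ θ) ^ j * hPhi S n (circ θ)
      = (circ θ) ^ (-(((((n:ℤ) - 1 - j).toNat) : ℕ):ℤ)) * (S.Φ (2*n-1)).eval (circ θ) := by
    intro θ
    rw [hPhi_eq S n hn (circ_ne θ), ← mul_assoc, ← zpow_add₀ (circ_ne θ)]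
    congr 2
    omega
  simp only [hptw]
  exact keyM S _ _ hk

lemma lbase_pair_hPhi (S : OTPSetup) (n : ℕ) (hn : 1 ≤ n) (j : ℕ) (hj : j ≤ 2*n-2) :
    ∫ θ, lbase j (circ θ) * hPhi S n (circ θ) ∂S.μ = 0 := by
  haveI := S.prob
  rcases Nat.even_or_odd j with ⟨m, hm⟩ | ⟨m, hm⟩
  · have hrw : (fun θ => lbase j (circ θ) * hPhi S n (circ θ))
        = fun θ => (2:ℂ)⁻¹ * ((circ θ)^((m:ℤ)) * hPhi S n (circ θ)
            + (circ θ)^(-(m:ℤ)) * hPhi S n (circ θ)) := by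
      funext θ
      rw [show j = 2*m by omega, lbase_even]
      simp only [zpow_natCast, zpow_neg, ← inv_pow]
      ring
    rw [hrw, integral_const_mul,
      integral_add (integrable_zpow_mul S.μ _ (contOn_hPhi S n))
        (integrable_zpow_mul S.μ _ (contOn_hPhi S n)),
      IA S n hn _ (by omega) (by omega), IA S n hn _ (by omega) (by omega)]
    simp
  · have hrw : (fun θ => lbase j (circ θ) * hPhi S n (circ θ))
        = fun θ => (2*Complex.I)⁻¹ * ((circ θ)^(((m+1:ℕ):ℤ)) * hPhi S n (circ θ)
            - (circ θ)^(-((m+1:ℕ):ℤ)) * hPhi S n (circ θ)) := by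
      funext θ
      rw [show j = 2*m+1 by omega, lbase_odd]
      simp only [zpow_natCast, zpow_neg, ← inv_pow]
      ring
    rw [hrw, integral_const_mul,
      integral_sub (integrable_zpow_mul S.μ _ (contOn_hPhi S n))
        (integrable_zpow_mul S.μ _ (contOn_hPhi S n)),
      IA S n hn _ (by omega) (by omega), IA S n hn _ (by omega) (by omega)]
    simp

lemma pair_em_L (S : OTPSetup) (m : ℤ) (K : ℕ) (hm : m.natAbs ≤ K) (i : ℕ)
    (hi : 2*K < i) :
    ∫ θ, (circ θ)^m * S.L i (circ θ) ∂S.μ = 0 := by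
  haveI := S.prob
  have hmem : (fun z : ℂ => z ^ m) ∈ span ℂ (S.L '' Set.Iic (2*K)) := by
    rw [← span_eq S (2*K)]
    exact em_mem m K hm
  exact pair_zero_spanC S.μ (contOn_L S i)
    (fun f hf => by obtain ⟨k, -, rfl⟩ := hf; exact contOn_L S k)
    (fun f hf => by
      obtain ⟨k, hk, rfl⟩ := hf
      have h := S.orthonormal k i
      rw [if_neg (by simp only [Set.mem_Iic] at hk; omega)] at h
      exact h)
    hmem

lemma lbase_pair_L (S : OTPSetup) (j i : ℕ) (hji : j < i) :
    innerR S.μ (lbase j) (S.L i) = 0 := by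
  haveI := S.prob
  have hmem : lbase j ∈ span ℂ (S.L '' Set.Iic j) := by
    rw [← span_eq S j]
    exact subset_span ⟨j, Set.mem_Iic.mpr le_rfl, rfl⟩
  exact pair_zero_spanC S.μ (contOn_L S i)
    (fun f hf => by obtain ⟨k, -, rfl⟩ := hf; exact contOn_L S k)
    (fun f hf => by
      obtain ⟨k, hk, rfl⟩ := hf
      have h := S.orthonormal k i
      rw [if_neg (by simp only [Set.mem_Iic] at hk; omega)] at h
      exact h)
    hmem

lemma L_pair_hPhi_low (S : OTPSetup) (n : ℕ) (hn : 1 ≤ n) (i : ℕ) (hi : i ≤ 2*n-2) :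
    ∫ θ, S.L i (circ θ) * hPhi S n (circ θ) ∂S.μ = 0 := by
  haveI := S.prob
  have hmem : S.L i ∈ span ℂ (lbase '' Set.Iic (2*n-2)) :=
    span_subset_span ℝ ℂ _
      (span_mono (Set.image_mono (Set.Iic_subset_Iic.mpr hi)) (S.mem_span i))
  exact pair_zero_spanC S.μ (contOn_hPhi S n)
    (fun f hf => by obtain ⟨k, -, rfl⟩ := hf; exact contOn_lbase k)
    (fun f hf => by
      obtain ⟨k, hk, rfl⟩ := hf
      exact lbase_pair_hPhi S n hn k hk)
    hmem

end OTPAux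
namespace OTPAux

open Submodule

lemma hPhi_split (S : OTPSetup) (n : ℕ) (hn : 1 ≤ n) (z : ℂ) :
    hPhi S n z = (∑ k ∈ Finset.range (2*n-1), (S.Φ (2*n-1)).coeff k * z ^ ((k:ℤ) + 1 - n))
      + (lbase (2*n) z + Complex.I * lbase (2*n-1) z) := by
  unfold hPhi
  rw [show 2*n = (2*n-1)+1 by omega, Finset.sum_range_succ,
    show (2*n-1)+1 = 2*n by omega]
  congr 1
  have hc : (S.Φ (2*n-1)).coeff (2*n-1) = 1 := by
    have h := (S.Φ_monic (2*n-1)).coeff_natDegree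
    rwa [S.Φ_deg] at h
  rw [hc, one_mul]
  have := congrFun (em_pos n hn) z
  simp only [Pi.add_apply, Pi.smul_apply, smul_eq_mul] at this
  rw [← this]
  congr 1
  omega

lemma L_pair_hPhi_top (S : OTPSetup) (n : ℕ) (hn : 1 ≤ n) (i : ℕ) (hi : 2*n-2 < i) :
    ∫ θ, S.L i (circ θ) * hPhi S n (circ θ) ∂S.μ
      = innerR S.μ (lbase (2*n)) (S.L i) + Complex.I * innerR S.μ (lbase (2*n-1)) (S.L i) := by
  haveI := S.prob
  have hrw : (fun θ => S.L i (circ θ) * hPhi S n (circ θ))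
      = fun θ => (∑ k ∈ Finset.range (2*n-1),
            (S.Φ (2*n-1)).coeff k * ((circ θ) ^ ((k:ℤ) + 1 - n) * S.L i (circ θ)))
          + (lbase (2*n) (circ θ) * S.L i (circ θ)
             + Complex.I * (lbase (2*n-1) (circ θ) * S.L i (circ θ))) := by
    funext θ
    rw [hPhi_split S n hn (circ θ), mul_add, Finset.mul_sum]
    congr 1
    · exact Finset.sum_congr rfl fun k _ => by ring
    · ring
  have hint1 : ∀ k ∈ Finset.range (2*n-1), Integrable
      (fun θ => (S.Φ (2*n-1)).coeff k * ((circ θ) ^ ((k:ℤ) + 1 - n) * S.L i (circ θ))) S.μ :=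
    fun k _ => (integrable_zpow_mul S.μ _ (contOn_L S i)).const_mul _
  have hint2 : Integrable (fun θ => lbase (2*n) (circ θ) * S.L i (circ θ)) S.μ :=
    integrable_mul S.μ (contOn_lbase _) (contOn_L S i)
  have hint3 : Integrable (fun θ => Complex.I * (lbase (2*n-1) (circ θ) * S.L i (circ θ))) S.μ :=
    (integrable_mul S.μ (contOn_lbase _) (contOn_L S i)).const_mul _
  have hint23 : Integrable (fun θ => lbase (2*n) (circ θ) * S.L i (circ θ)
      + Complex.I * (lbase (2*n-1) (circ θ) * S.L i (circ θ))) S.μ := hint2.add hint3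
  rw [hrw, integral_add (integrable_finset_sum _ hint1) hint23,
    integral_finset_sum _ hint1, integral_add hint2 hint3, integral_const_mul]
  have hz : ∀ k ∈ Finset.range (2*n-1),
      ∫ θ, (S.Φ (2*n-1)).coeff k * ((circ θ) ^ ((k:ℤ)+1-n) * S.L i (circ θ)) ∂S.μ = 0 := by
    intro k hk
    have hk' := Finset.mem_range.mp hk
    rw [integral_const_mul, pair_em_L S _ (n-1) (by omega) i (by omega), mul_zero]
  rw [Finset.sum_congr rfl hz, Finset.sum_const_zero, zero_add]
  rfl

lemma L_pair_hPhi_2n (S : OTPSetup) (n : ℕ) (hn : 1 ≤ n) :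
    ∫ θ, S.L (2*n) (circ θ) * hPhi S n (circ θ) ∂S.μ = (S.a n : ℂ) := by
  rw [L_pair_hPhi_top S n hn (2*n) (by omega), ← S.a_def n hn,
    lbase_pair_L S (2*n-1) (2*n) (by omega), mul_zero, add_zero]

lemma L_pair_hPhi_2n1 (S : OTPSetup) (n : ℕ) (hn : 1 ≤ n) :
    ∫ θ, S.L (2*n-1) (circ θ) * hPhi S n (circ θ) ∂S.μ
      = ((S.β n : ℂ) + Complex.I) * (S.b n : ℂ) := by
  rw [L_pair_hPhi_top S n hn (2*n-1) (by omega), ← S.β_def n hn, ← S.b_def n hn]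
  push_cast
  ring

end OTPAux
namespace OTPAux

open Submodule

lemma main532 (S : OTPSetup) (n : ℕ) (hn : 1 ≤ n) (w : ℂ) (hw : w ≠ 0) :
    (S.Φ (2*n-1)).eval w
      = w ^ (n-1) * ((S.a n : ℂ) * S.L (2*n) w
          + ((S.β n : ℂ) + Complex.I) * (S.b n : ℂ) * S.L (2*n-1) w) := by
  haveI := S.prob
  set c2 : ℂ := (S.a n : ℂ) with hc2
  set c1 : ℂ := ((S.β n : ℂ) + Complex.I) * (S.b n : ℂ) with hc1
  have hmem : (c2 • S.L (2*n) + c1 • S.L (2*n-1) - hPhi S n)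
      ∈ span ℂ (S.L '' Set.Iic (2*n)) := by
    refine sub_mem (add_mem (smul_mem _ _ (subset_span ⟨2*n, Set.mem_Iic.mpr le_rfl, rfl⟩))
      (smul_mem _ _ (subset_span ⟨2*n-1, Set.mem_Iic.mpr (by omega), rfl⟩))) ?_
    rw [← span_eq S (2*n)]
    have hsum : hPhi S n = ∑ k ∈ Finset.range (2*n),
        (S.Φ (2*n-1)).coeff k • (fun z : ℂ => z ^ ((k:ℤ) + 1 - n)) := by
      funext z
      simp [hPhi, Finset.sum_apply]
    rw [hsum]
    exact sum_mem fun k hk => smul_mem _ _ (em_mem _ n (by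
      have := Finset.mem_range.mp hk; omega))
  rw [image_eq_range] at hmem
  obtain ⟨d, hd⟩ := (mem_span_range_iff_exists_fun ℂ).mp hmem
  have hdz : ∀ i : Fin (2*n+1), d i = 0 := by
    intro i
    have h1 := pair_L_sum S (2*n) d i
    rw [hd] at h1
    have h2 : ∫ θ, S.L i (circ θ)
          * ((c2 • S.L (2*n) + c1 • S.L (2*n-1) - hPhi S n) (circ θ)) ∂S.μ
        = c2 * innerR S.μ (S.L i) (S.L (2*n)) + c1 * innerR S.μ (S.L i) (S.L (2*n-1))
          - ∫ θ, S.L i (circ θ) * hPhi S n (circ θ) ∂S.μ := by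
      have e1 : Integrable (fun θ => c2 * (S.L i (circ θ) * S.L (2*n) (circ θ))) S.μ :=
        (integrable_mul S.μ (contOn_L S i) (contOn_L S (2*n))).const_mul _
      have e2 : Integrable (fun θ => c1 * (S.L i (circ θ) * S.L (2*n-1) (circ θ))) S.μ :=
        (integrable_mul S.μ (contOn_L S i) (contOn_L S (2*n-1))).const_mul _
      have e12 : Integrable (fun θ => c2 * (S.L i (circ θ) * S.L (2*n) (circ θ))
          + c1 * (S.L i (circ θ) * S.L (2*n-1) (circ θ))) S.μ := e1.add e2
      have e3 : Integrable (fun θ => S.L i (circ θ) * hPhi S n (circ θ)) S.μ :=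
        integrable_mul S.μ (contOn_L S i) (contOn_hPhi S n)
      have hrw : (fun θ => S.L i (circ θ)
            * ((c2 • S.L (2*n) + c1 • S.L (2*n-1) - hPhi S n) (circ θ)))
          = fun θ => (c2 * (S.L i (circ θ) * S.L (2*n) (circ θ))
              + c1 * (S.L i (circ θ) * S.L (2*n-1) (circ θ)))
              - S.L i (circ θ) * hPhi S n (circ θ) := by
        funext θ
        simp only [Pi.sub_apply, Pi.add_apply, Pi.smul_apply, smul_eq_mul]
        ring
      rw [hrw, integral_sub e12 e3, integral_add e1 e2, integral_const_mul, integral_const_mul]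
      rfl
    rw [h2] at h1
    by_cases hia : (i:ℕ) = 2*n
    · rw [hia] at h1
      rw [L_pair_hPhi_2n S n hn, S.orthonormal (2*n) (2*n), S.orthonormal (2*n) (2*n-1),
        if_pos rfl, if_neg (by omega)] at h1
      rw [← h1, ← hc2]
      ring
    · by_cases hib : (i:ℕ) = 2*n-1
      · rw [hib] at h1
        rw [L_pair_hPhi_2n1 S n hn, S.orthonormal (2*n-1) (2*n), S.orthonormal (2*n-1) (2*n-1),
          if_pos rfl, if_neg (by omega)] at h1
        rw [← h1, ← hc1]
        ring
      · have hic : (i:ℕ) ≤ 2*n-2 := by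
          have := i.2
          omega
        rw [L_pair_hPhi_low S n hn i hic, S.orthonormal i (2*n), S.orthonormal i (2*n-1),
          if_neg (by omega), if_neg (by omega)] at h1
        rw [← h1]
        ring
  have hfun : c2 • S.L (2*n) + c1 • S.L (2*n-1) - hPhi S n = 0 := by
    rw [← hd]
    simp [hdz]
  have hw0 := congrFun hfun w
  simp only [Pi.sub_apply, Pi.add_apply, Pi.smul_apply, smul_eq_mul, Pi.zero_apply] at hw0
  rw [hPhi_eq S n hn hw] at hw0
  have hX : w ^ ((1:ℤ)-n) * (S.Φ (2*n-1)).eval w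
      = c2 * S.L (2*n) w + c1 * S.L (2*n-1) w := by
    linear_combination -hw0
  have h3 : w ^ ((n:ℤ)-1) * (w ^ ((1:ℤ)-n) * (S.Φ (2*n-1)).eval w) = (S.Φ (2*n-1)).eval w := by
    rw [← mul_assoc, ← zpow_add₀ hw, show ((n:ℤ)-1) + ((1:ℤ)-n) = 0 by ring, zpow_zero, one_mul]
  calc (S.Φ (2*n-1)).eval w
      = w ^ ((n:ℤ)-1) * (w ^ ((1:ℤ)-n) * (S.Φ (2*n-1)).eval w) := h3.symm
    _ = w ^ ((n:ℤ)-1) * (c2 * S.L (2*n) w + c1 * S.L (2*n-1) w) := by rw [hX]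
    _ = w ^ (n-1) * (c2 * S.L (2*n) w + c1 * S.L (2*n-1) w) := by
        rw [show ((n:ℤ)-1) = (((n-1 : ℕ)) : ℤ) by omega, zpow_natCast]

end OTPAux
/-- Formula (5.33): `Φ*_{2n-1}(z) = zⁿ [a_n σ_n(z) + (β_n − i) b_n π_n(z)]`. -/
theorem stmt7 (S : OTPSetup) (n : ℕ) (hn : 1 ≤ n) (z : ℂ) (hz : z ≠ 0) :
    (srev (S.Φ (2 * n - 1))).eval z
      = z ^ n * ((S.a n : ℂ) * S.σ n z + ((S.β n : ℂ) - Complex.I) * (S.b n : ℂ) * S.π n z) := by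
  rw [S.σ_def n hn, S.π_def n hn]
  have hdeg : ((S.Φ (2*n-1)).map (starRingEnd ℂ)).natDegree = 2*n-1 := by
    rw [Polynomial.natDegree_map]
    exact S.Φ_deg _
  have hcne : (starRingEnd ℂ) z ≠ 0 := by simpa using hz
  have hwne : ((starRingEnd ℂ) z)⁻¹ ≠ 0 := inv_ne_zero hcne
  have hσ : (starRingEnd ℂ) (S.L (2*n) (((starRingEnd ℂ) z)⁻¹)) = S.L (2*n) z :=
    OTPAux.conj_reflect_span (S.mem_span (2*n)) z
  have hπc : (starRingEnd ℂ) (S.L (2*n-1) (((starRingEnd ℂ) z)⁻¹)) = S.L (2*n-1) z :=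
    OTPAux.conj_reflect_span (S.mem_span (2*n-1)) z
  have hstep : (srev (S.Φ (2 * n - 1))).eval z
      = z ^ (2*n-1) * ((starRingEnd ℂ) ((S.Φ (2*n-1)).eval (((starRingEnd ℂ) z)⁻¹))) := by
    rw [srev, OTPAux.reverse_eval hz, hdeg, OTPAux.conj_eval, map_inv₀]
  rw [hstep, OTPAux.main532 S n hn _ hwne]
  simp only [map_mul, map_pow, map_inv₀, Complex.conj_conj, map_add,
    Complex.conj_ofReal, Complex.conj_I, hσ, hπc]
  have hzp : z ^ (2*n-1) * (z⁻¹) ^ (n-1) = z ^ n := by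
    rw [show 2*n-1 = n + (n-1) by omega, pow_add, mul_assoc, ← mul_pow,
      mul_inv_cancel₀ hz, one_pow, mul_one]
  calc z ^ (2*n-1) * ((z⁻¹) ^ (n-1) * ((S.a n : ℂ) * S.L (2*n) z
        + ((S.β n : ℂ) + -Complex.I) * (S.b n : ℂ) * S.L (2*n-1) z))
      = (z ^ (2*n-1) * (z⁻¹) ^ (n-1)) * ((S.a n : ℂ) * S.L (2*n) z
        + ((S.β n : ℂ) - Complex.I) * (S.b n : ℂ) * S.L (2*n-1) z) := by ring
    _ = z ^ n * ((S.a n : ℂ) * S.L (2*n) z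
        + ((S.β n : ℂ) - Complex.I) * (S.b n : ℂ) * S.L (2*n-1) z) := by rw [hzp]
end
end

section
/- With the notation above, if θ' ∈ [0,2π) is a zero of π_n (i.e. π_n(e^{iθ'}) = 0), then Φ_{2n−1}(e^{iθ'}) = a_n e^{i(n−1)θ'} σ_n(e^{iθ'}); in particular a_n⁻¹ = e^{i(n−1)θ'} σ_n(e^{iθ'}) / Φ_{2n−1}(e^{iθ'}). -/
open MeasureTheory Complex Polynomial

noncomputable section

def ec (θ : ℝ) : ℂ := Complex.exp (θ * Complex.I)

lemma ec_ne_zero (θ : ℝ) : ec θ ≠ 0 := Complex.exp_ne_zero _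
lemma norm_ec (θ : ℝ) : ‖ec θ‖ = 1 := Complex.norm_exp_ofReal_mul_I θ
lemma ec_inv (θ : ℝ) : (ec θ)⁻¹ = Complex.exp (-(θ * Complex.I)) := by
  rw [ec, ← Complex.exp_neg]
lemma conj_ec (θ : ℝ) : (starRingEnd ℂ) (ec θ) = (ec θ)⁻¹ := by
  rw [ec_inv, ec, ← Complex.exp_conj]
  congr 1
  simp

/-- "Nice" functions: continuous and bounded along the circle parametrization. -/
def Nice (f : ℂ → ℂ) : Prop :=
  Continuous (fun θ : ℝ => f (ec θ)) ∧ ∃ C : ℝ, ∀ θ : ℝ, ‖f (ec θ)‖ ≤ C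

lemma Nice.add {f g : ℂ → ℂ} (hf : Nice f) (hg : Nice g) : Nice (fun z => f z + g z) := by
  obtain ⟨hfc, Cf, hCf⟩ := hf; obtain ⟨hgc, Cg, hCg⟩ := hg
  exact ⟨hfc.add hgc, Cf + Cg, fun θ => (norm_add_le _ _).trans (add_le_add (hCf θ) (hCg θ))⟩

lemma Nice.sub {f g : ℂ → ℂ} (hf : Nice f) (hg : Nice g) : Nice (fun z => f z - g z) := by
  obtain ⟨hfc, Cf, hCf⟩ := hf; obtain ⟨hgc, Cg, hCg⟩ := hg
  exact ⟨hfc.sub hgc, Cf + Cg, fun θ => (norm_sub_le _ _).trans (add_le_add (hCf θ) (hCg θ))⟩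

lemma Nice.mul {f g : ℂ → ℂ} (hf : Nice f) (hg : Nice g) : Nice (fun z => f z * g z) := by
  obtain ⟨hfc, Cf, hCf⟩ := hf; obtain ⟨hgc, Cg, hCg⟩ := hg
  refine ⟨hfc.mul hgc, Cf * Cg, fun θ => ?_⟩
  rw [norm_mul]
  have h0 : (0:ℝ) ≤ ‖f (ec θ)‖ := norm_nonneg _
  have h1 : (0:ℝ) ≤ ‖g (ec θ)‖ := norm_nonneg _
  exact mul_le_mul (hCf θ) (hCg θ) h1 (le_trans h0 (hCf θ))

lemma Nice.const_mul {f : ℂ → ℂ} (c : ℂ) (hf : Nice f) : Nice (fun z => c * f z) := by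
  obtain ⟨hfc, Cf, hCf⟩ := hf
  refine ⟨continuous_const.mul hfc, ‖c‖ * Cf, fun θ => ?_⟩
  rw [norm_mul]
  exact mul_le_mul_of_nonneg_left (hCf θ) (norm_nonneg c)

lemma nice_const (c : ℂ) : Nice (fun _ => c) := ⟨continuous_const, ‖c‖, fun _ => le_refl _⟩

lemma Nice.conj {f : ℂ → ℂ} (hf : Nice f) : Nice (fun z => (starRingEnd ℂ) (f z)) := by
  obtain ⟨hfc, Cf, hCf⟩ := hf
  exact ⟨Complex.continuous_conj.comp hfc, Cf, fun θ => by simpa using hCf θ⟩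

lemma Nice.sum {F : ℕ → ℂ → ℂ} (s : Finset ℕ) (hF : ∀ j ∈ s, Nice (F j)) :
    Nice (fun z => ∑ j ∈ s, F j z) := by
  classical
  induction s using Finset.induction_on with
  | empty => simpa using nice_const 0
  | insert _ _ hx ih =>
    rename_i a s
    simp only [Finset.sum_insert hx]
    exact (hF a (Finset.mem_insert_self a s)).add
      (ih fun j hj => hF j (Finset.mem_insert_of_mem hj))

lemma nice_pow (k : ℕ) : Nice (fun z => z ^ k) := by
  refine ⟨?_, 1, fun θ => ?_⟩
  · exact (Complex.continuous_exp.comp (continuous_ofReal.mul continuous_const)).pow k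
  · rw [norm_pow, norm_ec]; exact le_of_eq (one_pow k)

lemma nice_inv_pow (k : ℕ) : Nice (fun z => (z⁻¹) ^ k) := by
  refine ⟨?_, 1, fun θ => ?_⟩
  · have : (fun θ : ℝ => (ec θ)⁻¹ ^ k) = fun θ : ℝ => Complex.exp (-(θ * Complex.I)) ^ k := by
      funext θ; rw [ec_inv]
    rw [this]
    exact (Complex.continuous_exp.comp (continuous_ofReal.mul continuous_const).neg).pow k
  · rw [norm_pow, norm_inv, norm_ec]; simp

lemma nice_lbase (j : ℕ) : Nice (lbase j) := by
  unfold lbase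
  by_cases h : Even j
  · simp only [if_pos h]
    have := ((nice_pow (j/2)).add (nice_inv_pow (j/2))).mul (nice_const (2⁻¹ : ℂ))
    exact this
  · simp only [if_neg h]
    have := ((nice_pow ((j+1)/2)).sub (nice_inv_pow ((j+1)/2))).mul (nice_const ((2*Complex.I)⁻¹ : ℂ))
    exact this

lemma Nice.integrable {f : ℂ → ℂ} (hf : Nice f) (μ : Measure ℝ) [IsFiniteMeasure μ] :
    Integrable (fun θ => f (ec θ)) μ := by
  obtain ⟨hfc, C, hC⟩ := hf
  exact (integrable_const C).mono' hfc.aestronglyMeasurable (Filter.Eventually.of_forall hC)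

lemma innerR_def' (μ : Measure ℝ) (f g : ℂ → ℂ) :
    innerR μ f g = ∫ θ, f (ec θ) * g (ec θ) ∂μ := rfl

lemma innerC_def' (μ : Measure ℝ) (f g : ℂ → ℂ) :
    innerC μ f g = ∫ θ, (starRingEnd ℂ) (f (ec θ)) * g (ec θ) ∂μ := rfl

lemma innerR_comm (μ : Measure ℝ) (f g : ℂ → ℂ) : innerR μ f g = innerR μ g f := by
  unfold innerR; congr 1; funext θ; ring

lemma innerC_conj_symm (μ : Measure ℝ) (f g : ℂ → ℂ) :
    innerC μ f g = (starRingEnd ℂ) (innerC μ g f) := by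
  rw [innerC_def', innerC_def', ← integral_conj]
  congr 1; funext θ
  simp [mul_comm]

lemma innerR_sum_left (μ : Measure ℝ) [IsFiniteMeasure μ] (s : Finset ℕ) (c : ℕ → ℂ)
    (F : ℕ → ℂ → ℂ) (hF : ∀ j ∈ s, Nice (F j)) (g : ℂ → ℂ) (hg : Nice g) :
    innerR μ (fun z => ∑ j ∈ s, c j * F j z) g = ∑ j ∈ s, c j * innerR μ (F j) g := by
  rw [innerR_def']
  have : (fun θ => (∑ j ∈ s, c j * F j (ec θ)) * g (ec θ))
      = fun θ => ∑ j ∈ s, c j * (F j (ec θ) * g (ec θ)) := by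
    funext θ; rw [Finset.sum_mul]; exact Finset.sum_congr rfl fun j _ => by ring
  rw [this, integral_finset_sum]
  · exact Finset.sum_congr rfl fun j hj => by
      rw [integral_const_mul]; rfl
  · intro j hj
    exact (((hF j hj).mul hg).integrable μ).const_mul (c j)

lemma innerR_sum_right (μ : Measure ℝ) [IsFiniteMeasure μ] (s : Finset ℕ) (c : ℕ → ℂ)
    (F : ℕ → ℂ → ℂ) (hF : ∀ j ∈ s, Nice (F j)) (g : ℂ → ℂ) (hg : Nice g) :
    innerR μ g (fun z => ∑ j ∈ s, c j * F j z) = ∑ j ∈ s, c j * innerR μ g (F j) := by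
  rw [innerR_comm, innerR_sum_left μ s c F hF g hg]
  exact Finset.sum_congr rfl fun j _ => by rw [innerR_comm]

lemma innerR_add_left (μ : Measure ℝ) [IsFiniteMeasure μ] {f g h : ℂ → ℂ}
    (hf : Nice f) (hg : Nice g) (hh : Nice h) :
    innerR μ (fun z => f z + g z) h = innerR μ f h + innerR μ g h := by
  rw [innerR_def', innerR_def', innerR_def', ← integral_add ((hf.mul hh).integrable μ) ((hg.mul hh).integrable μ)]
  congr 1; funext θ; ring

lemma innerR_sub_left (μ : Measure ℝ) [IsFiniteMeasure μ] {f g h : ℂ → ℂ}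
    (hf : Nice f) (hg : Nice g) (hh : Nice h) :
    innerR μ (fun z => f z - g z) h = innerR μ f h - innerR μ g h := by
  rw [innerR_def', innerR_def', innerR_def', ← integral_sub ((hf.mul hh).integrable μ) ((hg.mul hh).integrable μ)]
  congr 1; funext θ; ring

lemma innerR_const_mul_left (μ : Measure ℝ) (c : ℂ) (f h : ℂ → ℂ) :
    innerR μ (fun z => c * f z) h = c * innerR μ f h := by
  rw [innerR_def', innerR_def', ← integral_const_mul]
  congr 1; funext θ; ring

lemma rep_of_mem_span (F : ℕ → ℂ → ℂ) (m : ℕ) {x : ℂ → ℂ}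
    (hx : x ∈ Submodule.span ℝ (F '' Set.Iic m)) :
    ∃ c : ℕ → ℝ, x = fun z => ∑ j ∈ Finset.range (m+1), (c j : ℂ) * F j z := by
  induction hx using Submodule.span_induction with
  | mem y hy =>
    obtain ⟨j, hj, rfl⟩ := hy
    refine ⟨fun i => if i = j then 1 else 0, ?_⟩
    funext z
    rw [Finset.sum_eq_single j]
    · simp
    · intro i _ hij; simp [hij]
    · intro hj'
      exact absurd (Finset.mem_range.2 (Nat.lt_succ_of_le hj)) hj'
  | zero => exact ⟨0, by funext z; simp⟩
  | add y w hy hw ihy ihw =>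
    obtain ⟨cy, hcy⟩ := ihy; obtain ⟨cw, hcw⟩ := ihw
    refine ⟨cy + cw, ?_⟩
    funext z
    rw [show (y + w) z = y z + w z from rfl, hcy, hcw, ← Finset.sum_add_distrib]
    exact Finset.sum_congr rfl fun j _ => by
      simp only [Pi.add_apply, Complex.ofReal_add]; ring
  | smul r y hy ihy =>
    obtain ⟨cy, hcy⟩ := ihy
    refine ⟨r • cy, ?_⟩
    funext z
    rw [show (r • y) z = (r : ℂ) * y z from by simp [Complex.real_smul], hcy,
      Finset.mul_sum]
    exact Finset.sum_congr rfl fun j _ => by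
      simp only [Pi.smul_apply, smul_eq_mul, Complex.ofReal_mul]; ring

lemma nice_of_rep {x : ℂ → ℂ} {F : ℕ → ℂ → ℂ} (hF : ∀ j, Nice (F j)) {m : ℕ} {c : ℕ → ℝ}
    (hx : x = fun z => ∑ j ∈ Finset.range (m+1), (c j : ℂ) * F j z) : Nice x := by
  rw [hx]
  exact Nice.sum _ fun j _ => Nice.const_mul _ (hF j)


lemma nice_L (S : OTPSetup) (m : ℕ) : Nice (S.L m) := by
  obtain ⟨c, hc⟩ := rep_of_mem_span lbase m (S.mem_span m)
  exact nice_of_rep (fun j => nice_lbase j) hc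

lemma fun_sum_eq_sum_smul (c : ℕ → ℝ) (F : ℕ → ℂ → ℂ) (s : Finset ℕ) :
    (fun z => ∑ i ∈ s, (c i : ℂ) * F i z) = ∑ i ∈ s, c i • F i := by
  funext z
  rw [Finset.sum_apply]
  exact Finset.sum_congr rfl fun i _ => by simp [Complex.real_smul]

lemma lbase_mem_span_L (S : OTPSetup) : ∀ j, lbase j ∈ Submodule.span ℝ (S.L '' Set.Iic j) := by
  haveI := S.prob
  intro j
  induction j using Nat.strong_induction_on with
  | _ j IH =>
  obtain ⟨c, hc⟩ := rep_of_mem_span lbase j (S.mem_span j)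
  by_cases hcj : c j = 0
  · exfalso
    -- in this case L j lies in the span of earlier L's, contradicting orthonormality
    have hLj : S.L j ∈ Submodule.span ℝ (S.L '' Set.Iio j) := by
      rw [hc, fun_sum_eq_sum_smul]
      refine Submodule.sum_mem _ fun i hi => ?_
      have hij : i < j + 1 := Finset.mem_range.1 hi
      rcases Nat.lt_succ_iff_lt_or_eq.1 hij with hlt | heq
      · refine Submodule.smul_mem _ _ ?_
        exact Submodule.span_mono (Set.image_mono fun t ht => lt_of_le_of_lt ht hlt)
          (IH i hlt)
      · rw [heq, hcj]
        simpa using Submodule.zero_mem _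
    rcases Nat.eq_zero_or_pos j with rfl | hj
    · rw [show Set.Iio 0 = (∅ : Set ℕ) from by ext i; simp] at hLj
      rw [Set.image_empty, Submodule.span_empty, Submodule.mem_bot] at hLj
      rw [S.L_zero] at hLj
      have h10 : (1 : ℂ) = 0 := congrFun hLj 0
      exact one_ne_zero h10
    · obtain ⟨k, rfl⟩ := Nat.exists_eq_add_of_le hj
      have hIio : Set.Iio (1 + k) = Set.Iic k := by
        ext i; simp [Nat.lt_succ_iff, Nat.lt_add_one_iff, Nat.add_comm]
      rw [hIio] at hLj
      obtain ⟨d, hd⟩ := rep_of_mem_span S.L k hLj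
      have h1 : innerR S.μ (S.L (1+k)) (S.L (1+k)) = 1 := by
        rw [S.orthonormal]; simp
      nth_rewrite 1 [hd] at h1
      rw [innerR_sum_left S.μ _ _ S.L (fun i _ => nice_L S i) _ (nice_L S (1+k))] at h1
      have h0 : ∀ i ∈ Finset.range (k+1), (d i : ℂ) * innerR S.μ (S.L i) (S.L (1+k)) = 0 := by
        intro i hi
        rw [S.orthonormal, if_neg (by have := Finset.mem_range.1 hi; omega), mul_zero]
      rw [Finset.sum_eq_zero h0] at h1
      exact one_ne_zero h1.symm
  · -- c j ≠ 0 : invert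
    have heq : lbase j = (c j)⁻¹ • (S.L j - ∑ i ∈ Finset.range j, c i • lbase i) := by
      funext z
      have hz := congrFun hc z
      rw [Finset.sum_range_succ] at hz
      have : (∑ i ∈ Finset.range j, c i • lbase i) z
          = ∑ i ∈ Finset.range j, (c i : ℂ) * lbase i z := by
        rw [Finset.sum_apply]
        exact Finset.sum_congr rfl fun i _ => by simp [Complex.real_smul]
      rw [Pi.smul_apply, Pi.sub_apply, this, hz, add_sub_cancel_left, Complex.real_smul,
        ← mul_assoc, ← Complex.ofReal_mul, inv_mul_cancel₀ hcj, Complex.ofReal_one, one_mul]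
    rw [heq]
    refine Submodule.smul_mem _ _ (Submodule.sub_mem _ ?_ ?_)
    · exact Submodule.subset_span ⟨j, Set.mem_Iic.2 le_rfl, rfl⟩
    · refine Submodule.sum_mem _ fun i hi => Submodule.smul_mem _ _ ?_
      have hij : i < j := Finset.mem_range.1 hi
      exact Submodule.span_mono (Set.image_mono fun t ht => le_trans ht hij.le) (IH i hij)

lemma orth_lbase_L (S : OTPSetup) {j m : ℕ} (h : j < m) :
    innerR S.μ (lbase j) (S.L m) = 0 := by
  haveI := S.prob
  obtain ⟨d, hd⟩ := rep_of_mem_span S.L j (lbase_mem_span_L S j)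
  rw [hd, innerR_sum_left S.μ _ _ S.L (fun i _ => nice_L S i) _ (nice_L S m)]
  refine Finset.sum_eq_zero fun i hi => ?_
  rw [S.orthonormal, if_neg (by have := Finset.mem_range.1 hi; omega), mul_zero]

lemma two_mul_sub_one_odd {t : ℕ} (ht : 1 ≤ t) : ¬ Even (2*t-1) := by
  rintro ⟨k, hk⟩; omega

lemma lbase_combo_pos (t : ℕ) (ht : 1 ≤ t) (z : ℂ) :
    lbase (2*t) z + Complex.I * lbase (2*t-1) z = z ^ t := by
  unfold lbase
  rw [if_pos (even_two_mul t), if_neg (two_mul_sub_one_odd ht)]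
  have h1 : 2*t/2 = t := by omega
  have h2 : (2*t-1+1)/2 = t := by omega
  rw [h1, h2]
  have hI : (Complex.I : ℂ) ≠ 0 := Complex.I_ne_zero
  field_simp
  ring

lemma lbase_combo_neg (t : ℕ) (ht : 1 ≤ t) (z : ℂ) :
    lbase (2*t) z - Complex.I * lbase (2*t-1) z = (z⁻¹) ^ t := by
  unfold lbase
  rw [if_pos (even_two_mul t), if_neg (two_mul_sub_one_odd ht)]
  have h1 : 2*t/2 = t := by omega
  have h2 : (2*t-1+1)/2 = t := by omega
  rw [h1, h2]
  have hI : (Complex.I : ℂ) ≠ 0 := Complex.I_ne_zero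
  field_simp
  ring

lemma exists_poly_lbase (n j : ℕ) (hn : 1 ≤ n) (hj : j ≤ 2*n-2) :
    ∃ P : Polynomial ℂ, P.natDegree ≤ 2*n-2 ∧
      ∀ z : ℂ, z ≠ 0 → z^(n-1) * lbase j z = P.eval z := by
  by_cases h : Even j
  · obtain ⟨k, rfl⟩ := h
    have hk : k ≤ n-1 := by omega
    refine ⟨Polynomial.C (1/2 : ℂ) * Polynomial.X^(n-1+k) + Polynomial.C (1/2 : ℂ) * Polynomial.X^(n-1-k), ?_, ?_⟩
    · refine (Polynomial.natDegree_add_le _ _).trans (max_le ?_ ?_) <;>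
      · refine (Polynomial.natDegree_C_mul_le _ _).trans ?_
        rw [Polynomial.natDegree_X_pow]
        omega
    · intro z hz
      unfold lbase
      rw [if_pos ⟨k, rfl⟩]
      have hdiv : (k+k)/2 = k := by omega
      rw [hdiv]
      simp only [Polynomial.eval_add, Polynomial.eval_mul, Polynomial.eval_C,
        Polynomial.eval_pow, Polynomial.eval_X]
      have key : z ^ (n-1-k) = z^(n-1) * z⁻¹^k := by rw [pow_sub₀ z hz hk, inv_pow]
      rw [pow_add, key]
      ring
  · have hj1 : 1 ≤ j := by
      rcases j with _ | j
      · exact absurd (Even.zero) h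
      · omega
    obtain ⟨k, hk⟩ : ∃ k, j = 2*k-1 ∧ 1 ≤ k := by
      rcases Nat.even_or_odd j with he | ho
      · exact absurd he h
      · obtain ⟨k, hk⟩ := ho; exact ⟨k+1, by omega, by omega⟩
    obtain ⟨hjk, hk1⟩ := hk
    subst hjk
    have hk : k ≤ n-1 := by omega
    refine ⟨Polynomial.C (1/(2*Complex.I) : ℂ) * Polynomial.X^(n-1+k)
      - Polynomial.C (1/(2*Complex.I) : ℂ) * Polynomial.X^(n-1-k), ?_, ?_⟩
    · refine (Polynomial.natDegree_sub_le _ _).trans (max_le ?_ ?_) <;>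
      · refine (Polynomial.natDegree_C_mul_le _ _).trans ?_
        rw [Polynomial.natDegree_X_pow]
        omega
    · intro z hz
      unfold lbase
      rw [if_neg h]
      have hdiv : (2*k-1+1)/2 = k := by omega
      rw [hdiv]
      simp only [Polynomial.eval_sub, Polynomial.eval_mul, Polynomial.eval_C,
        Polynomial.eval_pow, Polynomial.eval_X]
      have key : z ^ (n-1-k) = z^(n-1) * z⁻¹^k := by rw [pow_sub₀ z hz hk, inv_pow]
      rw [pow_add, key]
      have hI : (Complex.I : ℂ) ≠ 0 := Complex.I_ne_zero
      field_simp

lemma nice_id : Nice (fun z : ℂ => z) := by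
  have := nice_pow 1
  simpa using this

lemma nice_poly (p : Polynomial ℂ) : Nice (fun z => p.eval z) := by
  have h : (fun z : ℂ => p.eval z)
      = fun z => ∑ i ∈ Finset.range (p.natDegree+1), p.coeff i * z^i := by
    funext z; exact Polynomial.eval_eq_sum_range z
  rw [h]
  exact Nice.sum _ fun j _ => Nice.const_mul _ (nice_pow j)

lemma innerC_sub_right (μ : Measure ℝ) [IsFiniteMeasure μ] {f g h : ℂ → ℂ}
    (hf : Nice f) (hg : Nice g) (hh : Nice h) :
    innerC μ f (fun z => g z - h z) = innerC μ f g - innerC μ f h := by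
  rw [innerC_def', innerC_def', innerC_def',
    ← integral_sub ((hf.conj.mul hg).integrable μ) ((hf.conj.mul hh).integrable μ)]
  congr 1; funext t; ring

lemma innerC_sub_left (μ : Measure ℝ) [IsFiniteMeasure μ] {f g h : ℂ → ℂ}
    (hf : Nice f) (hg : Nice g) (hh : Nice h) :
    innerC μ (fun z => f z - g z) h = innerC μ f h - innerC μ g h := by
  rw [innerC_def', innerC_def', innerC_def',
    ← integral_sub ((hf.conj.mul hh).integrable μ) ((hg.conj.mul hh).integrable μ)]
  congr 1; funext t; simp only [map_sub]; ring

lemma innerC_const_mul_right (μ : Measure ℝ) (c : ℂ) (f g : ℂ → ℂ) :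
    innerC μ f (fun z => c * g z) = c * innerC μ f g := by
  rw [innerC_def', innerC_def', ← integral_const_mul]
  congr 1; funext t; ring

lemma innerC_const_mul_left (μ : Measure ℝ) (c : ℂ) (f g : ℂ → ℂ) :
    innerC μ (fun z => c * f z) g = (starRingEnd ℂ) c * innerC μ f g := by
  rw [innerC_def', innerC_def', ← integral_const_mul]
  congr 1; funext t; simp only [map_mul]; ring

lemma innerC_sum_left' (μ : Measure ℝ) [IsFiniteMeasure μ] (s : Finset ℕ) (c : ℕ → ℂ)
    (F : ℕ → ℂ → ℂ) (hF : ∀ j ∈ s, Nice (F j)) (g : ℂ → ℂ) (hg : Nice g) :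
    innerC μ (fun z => ∑ j ∈ s, c j * F j z) g
      = ∑ j ∈ s, (starRingEnd ℂ) (c j) * innerC μ (F j) g := by
  rw [innerC_def']
  have h : (fun t => (starRingEnd ℂ) (∑ j ∈ s, c j * F j (ec t)) * g (ec t))
      = fun t => ∑ j ∈ s, (starRingEnd ℂ) (c j) * ((starRingEnd ℂ) (F j (ec t)) * g (ec t)) := by
    funext t
    rw [map_sum, Finset.sum_mul]
    exact Finset.sum_congr rfl fun j _ => by rw [map_mul]; ring
  rw [h, integral_finset_sum]
  · exact Finset.sum_congr rfl fun j hj => by rw [integral_const_mul]; rfl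
  · intro j hj
    exact (((hF j hj).conj.mul hg).integrable μ).const_mul _

lemma phi_ne_zero (S : OTPSetup) (m : ℕ) (w : ℂ)
    (hw : (starRingEnd ℂ) w * w = 1) : (S.Φ m).eval w ≠ 0 := by
  haveI := S.prob
  intro hroot
  -- factor
  obtain ⟨s, hs⟩ := (Polynomial.dvd_iff_isRoot.2 hroot)
  have hΦ0 : S.Φ m ≠ 0 := (S.Φ_monic m).ne_zero
  have hs0 : s ≠ 0 := by
    rintro rfl; rw [mul_zero] at hs; exact hΦ0 hs
  have hXw : (Polynomial.X - Polynomial.C w) ≠ 0 := Polynomial.X_sub_C_ne_zero w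
  have hdeg : s.natDegree = m - 1 ∧ 1 ≤ m := by
    have := S.Φ_deg m
    rw [hs, Polynomial.natDegree_mul hXw hs0, Polynomial.natDegree_X_sub_C] at this
    omega
  -- notation
  set μ := S.μ with hμ
  set Sf : ℂ → ℂ := fun z => s.eval z with hSf
  set Φf : ℂ → ℂ := fun z => (S.Φ m).eval z with hΦf
  set zS : ℂ → ℂ := fun z => z * s.eval z with hzS
  have hnSf : Nice Sf := nice_poly s
  have hnΦf : Nice Φf := nice_poly (S.Φ m)
  have hnzS : Nice zS := nice_id.mul hnSf
  -- Sf as sum of monomials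
  have hSfsum : Sf = fun z => ∑ k ∈ Finset.range m, s.coeff k * z^k := by
    funext z
    exact Polynomial.eval_eq_sum_range' (by omega) z
  -- ⟨s, Φ⟩ = 0
  have hsΦ : innerC μ Sf Φf = 0 := by
    rw [hSfsum, innerC_sum_left' μ _ _ _ (fun j _ => nice_pow j) _ hnΦf]
    refine Finset.sum_eq_zero fun k hk => ?_
    rw [S.Φ_orth m k (Finset.mem_range.1 hk), mul_zero]
  -- Φf = zS - w • Sf pointwise
  have hΦfun : Φf = fun z => zS z - w * Sf z := by
    funext z
    rw [hΦf, hs]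
    simp [hzS, hSf]
    ring
  -- ⟨Φ, s⟩ = 0 hence ⟨zS, s⟩ = conj w ⟨s,s⟩
  have hΦs : innerC μ Φf Sf = 0 := by
    rw [innerC_conj_symm, hsΦ, map_zero]
  have h1 : innerC μ zS Sf - (starRingEnd ℂ) w * innerC μ Sf Sf = 0 := by
    rw [← innerC_const_mul_left μ w Sf Sf]
    rw [← innerC_sub_left μ hnzS (Nice.const_mul w hnSf) hnSf]
    rw [← hΦs]
    congr 1
    exact hΦfun.symm
  -- ⟨zS, zS⟩ = ⟨s, s⟩
  have h2 : innerC μ zS zS = innerC μ Sf Sf := by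
    rw [innerC_def', innerC_def']
    congr 1; funext t
    have hconj : (starRingEnd ℂ) (ec t) * ec t = 1 := by
      rw [conj_ec]
      exact inv_mul_cancel₀ (ec_ne_zero t)
    simp only [hzS, hSf, map_mul]
    calc (starRingEnd ℂ) (ec t) * (starRingEnd ℂ) (s.eval (ec t)) * (ec t * s.eval (ec t))
        = ((starRingEnd ℂ) (ec t) * ec t) * ((starRingEnd ℂ) (s.eval (ec t)) * s.eval (ec t)) := by ring
      _ = (starRingEnd ℂ) (s.eval (ec t)) * s.eval (ec t) := by rw [hconj, one_mul]
  -- ⟨s, zS⟩ = w ⟨s,s⟩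
  have hself : (starRingEnd ℂ) (innerC μ Sf Sf) = innerC μ Sf Sf := by
    rw [← innerC_conj_symm]
  have h3 : innerC μ Sf zS = w * innerC μ Sf Sf := by
    have hz1 : innerC μ zS Sf = (starRingEnd ℂ) w * innerC μ Sf Sf := sub_eq_zero.1 h1
    rw [innerC_conj_symm μ Sf zS, hz1, map_mul, Complex.conj_conj, hself]
  -- conclude ⟨Φ, Φ⟩ = 0
  have h4 : innerC μ Φf Φf = 0 := by
    calc innerC μ Φf Φf
        = innerC μ Φf zS - w * innerC μ Φf Sf := by
          rw [← innerC_const_mul_right μ w Φf Sf,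
            ← innerC_sub_right μ hnΦf hnzS (Nice.const_mul w hnSf)]
          congr 1
      _ = innerC μ Φf zS := by rw [hΦs, mul_zero, sub_zero]
      _ = innerC μ zS zS - (starRingEnd ℂ) w * innerC μ Sf zS := by
          nth_rewrite 1 [hΦfun]
          rw [← innerC_const_mul_left μ w Sf zS,
            ← innerC_sub_left μ hnzS (Nice.const_mul w hnSf) hnzS]
      _ = innerC μ Sf Sf - (starRingEnd ℂ) w * (w * innerC μ Sf Sf) := by rw [h2, h3]
      _ = (1 - (starRingEnd ℂ) w * w) * innerC μ Sf Sf := by ring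
      _ = 0 := by rw [hw, sub_self, zero_mul]
  -- contradiction with κ_def
  have := S.κ_def m
  rw [show innerC S.μ (fun z => (S.Φ m).eval z) (fun z => (S.Φ m).eval z) = innerC μ Φf Φf from rfl,
    h4, mul_zero] at this
  exact zero_ne_one this

lemma lbase_zero_eq_one (z : ℂ) : lbase 0 z = 1 := by
  unfold lbase; norm_num

lemma key_identity (S : OTPSetup) (n : ℕ) (hn : 1 ≤ n) (z : ℂ) (hz : z ≠ 0) :
    (S.Φ (2*n-1)).eval z
      = z^(n-1) * (((S.a n : ℝ) : ℂ) * S.L (2*n) z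
          + (((S.β n : ℝ) : ℂ) + Complex.I) * ((S.b n : ℝ) : ℂ) * S.L (2*n-1) z) := by
  haveI := S.prob
  obtain ⟨N, hN⟩ : ∃ N, 2*n = N+1 := ⟨2*n-1, by omega⟩
  have hN1 : 2*n-1 = N := by omega
  have hNge : 1 ≤ N := by omega
  rw [hN1, hN]
  set a : ℂ := ((S.a n : ℝ) : ℂ) with ha
  set b : ℂ := ((S.b n : ℝ) : ℂ) with hb
  set β : ℂ := ((S.β n : ℝ) : ℂ) with hβ
  set w : ℂ := (β + Complex.I) * b with hwdef
  have ha_def : a = innerR S.μ (lbase (N+1)) (S.L (N+1)) := by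
    rw [ha, S.a_def n hn, hN]
  have hb_def : b = innerR S.μ (lbase N) (S.L N) := by
    rw [hb, S.b_def n hn, hN1]
  have hβ_def : β * b = innerR S.μ (lbase (N+1)) (S.L N) := by
    rw [hβ, hb, ← Complex.ofReal_mul, S.β_def n hn, hN1, hN]
  obtain ⟨c, hc⟩ := rep_of_mem_span lbase (N+1) (S.mem_span (N+1))
  obtain ⟨c', hc'⟩ := rep_of_mem_span lbase N (S.mem_span N)
  have hF1 : (c (N+1) : ℂ) * a = 1 := by
    have h1 : innerR S.μ (S.L (N+1)) (S.L (N+1)) = 1 := by rw [S.orthonormal]; simp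
    nth_rewrite 1 [hc] at h1
    rw [innerR_sum_left S.μ _ _ lbase (fun i _ => nice_lbase i) _ (nice_L S (N+1)),
      Finset.sum_range_succ] at h1
    rw [Finset.sum_eq_zero (fun i hi => by
      rw [orth_lbase_L S (Finset.mem_range.1 hi), mul_zero])] at h1
    rw [zero_add, ← ha_def] at h1
    exact h1
  have hF2 : (c' N : ℂ) * b = 1 := by
    have h1 : innerR S.μ (S.L N) (S.L N) = 1 := by rw [S.orthonormal]; simp
    nth_rewrite 1 [hc'] at h1
    rw [innerR_sum_left S.μ _ _ lbase (fun i _ => nice_lbase i) _ (nice_L S N),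
      Finset.sum_range_succ] at h1
    rw [Finset.sum_eq_zero (fun i hi => by
      rw [orth_lbase_L S (Finset.mem_range.1 hi), mul_zero])] at h1
    rw [zero_add, ← hb_def] at h1
    exact h1
  have hF3 : (c (N+1) : ℂ) * (β*b) + (c N : ℂ) * b = 0 := by
    have h1 : innerR S.μ (S.L (N+1)) (S.L N) = 0 := by
      rw [S.orthonormal, if_neg (by omega)]
    nth_rewrite 1 [hc] at h1
    rw [innerR_sum_left S.μ _ _ lbase (fun i _ => nice_lbase i) _ (nice_L S N),
      Finset.sum_range_succ, Finset.sum_range_succ] at h1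
    rw [Finset.sum_eq_zero (fun i hi => by
      rw [orth_lbase_L S (Finset.mem_range.1 hi), mul_zero])] at h1
    rw [zero_add, ← hb_def, ← hβ_def] at h1
    linear_combination h1
  have hbne : b ≠ 0 := by
    rw [hb]
    exact_mod_cast (S.b_pos n).ne'
  set u : ℕ → ℂ := fun j => a * (c j : ℂ) + w * (if j < N+1 then (c' j : ℂ) else 0) with hu
  have hH : ∀ t : ℂ, a * S.L (N+1) t + w * S.L N t
      = ∑ j ∈ Finset.range (N+2), u j * lbase j t := by
    intro t
    rw [congrFun hc t, congrFun hc' t, Finset.mul_sum, Finset.mul_sum]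
    have hsplit : ∑ j ∈ Finset.range (N+2), u j * lbase j t
        = (∑ j ∈ Finset.range (N+2), a * ((c j : ℂ) * lbase j t))
          + ∑ j ∈ Finset.range (N+2), w * ((if j < N+1 then (c' j : ℂ) else 0) * lbase j t) := by
      rw [← Finset.sum_add_distrib]
      exact Finset.sum_congr rfl fun j _ => by rw [hu]; ring
    rw [hsplit]
    congr 1
    conv_rhs => rw [Finset.sum_range_succ]
    rw [if_neg (lt_irrefl (N+1)), zero_mul, mul_zero, add_zero]
    exact Finset.sum_congr rfl fun j hj => by rw [if_pos (Finset.mem_range.1 hj)]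
  have hu_top : u (N+1) = 1 := by
    have hni : ¬ (N+1 < N+1) := lt_irrefl _
    simp only [hu]
    rw [if_neg hni, mul_zero, add_zero, mul_comm]
    exact hF1
  have hu_next : u N = Complex.I := by
    have h4 : (c N : ℂ) = -((c (N+1):ℂ) * β) := by
      apply mul_right_cancel₀ hbne
      linear_combination hF3
    simp only [hu]
    rw [if_pos (Nat.lt_succ_self N), h4, hwdef]
    linear_combination (-β) * hF1 + (β + Complex.I) * hF2
  -- polynomials for the low-order part
  have h5 : ∀ j : ℕ, ∃ P : Polynomial ℂ, P.natDegree ≤ 2*n-2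
      ∧ (j ≤ 2*n-2 → ∀ t : ℂ, t ≠ 0 → t^(n-1) * lbase j t = P.eval t) := by
    intro j
    by_cases hj : j ≤ 2*n-2
    · obtain ⟨P, h1, h2⟩ := exists_poly_lbase n j hn hj
      exact ⟨P, h1, fun _ => h2⟩
    · exact ⟨0, by simp, fun h => absurd h hj⟩
  choose P hPdeg hPev using h5
  set q : Polynomial ℂ := Polynomial.X^N + ∑ j ∈ Finset.range N, Polynomial.C (u j) * P j with hq
  have hq_ev : ∀ t : ℂ, t ≠ 0 →
      q.eval t = t^(n-1) * (a * S.L (N+1) t + w * S.L N t) := by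
    intro t ht
    rw [hH t, hq, Finset.sum_range_succ, Finset.sum_range_succ, hu_top, hu_next, one_mul]
    have htop : lbase (N+1) t + Complex.I * lbase N t = t^n := by
      have h := lbase_combo_pos n hn t
      rw [hN1, hN] at h
      exact h
    simp only [Polynomial.eval_add, Polynomial.eval_pow, Polynomial.eval_X,
      Polynomial.eval_finset_sum, Polynomial.eval_mul, Polynomial.eval_C]
    rw [Finset.sum_congr rfl (fun j hj => by
      rw [← hPev j (by have := Finset.mem_range.1 hj; omega) t ht])]
    have hsum : ∑ j ∈ Finset.range N, u j * (t^(n-1) * lbase j t)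
        = t^(n-1) * ∑ j ∈ Finset.range N, u j * lbase j t := by
      rw [Finset.mul_sum]
      exact Finset.sum_congr rfl fun j _ => by ring
    rw [hsum]
    have hpow : t^(n-1) * t^n = t^N := by
      rw [← pow_add]
      congr 1
      omega
    rw [add_assoc, add_comm (Complex.I * lbase N t), htop, mul_add, hpow]
    ring
  -- degree bounds
  have hsumdeg : (∑ j ∈ Finset.range N, Polynomial.C (u j) * P j).natDegree ≤ 2*n-2 := by
    refine Polynomial.natDegree_sum_le_of_forall_le (Finset.range N)
      (fun j => Polynomial.C (u j) * P j) fun j _ => ?_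
    exact (Polynomial.natDegree_C_mul_le _ _).trans (hPdeg j)
  have hΦ0 : S.Φ N ≠ 0 := (S.Φ_monic N).ne_zero
  have hd1 : (S.Φ N - Polynomial.X^N).natDegree < N := by
    by_cases h0 : S.Φ N - Polynomial.X^N = 0
    · rw [h0]
      simpa using (show 0 < N by omega)
    · rw [Polynomial.natDegree_lt_iff_degree_lt h0]
      have hdeg : (S.Φ N).degree = (Polynomial.X^N : Polynomial ℂ).degree := by
        rw [Polynomial.degree_X_pow, Polynomial.degree_eq_natDegree hΦ0, S.Φ_deg N]
      have hlt := Polynomial.degree_sub_lt hdeg hΦ0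
        (by rw [(S.Φ_monic N).leadingCoeff, Polynomial.leadingCoeff_X_pow])
      calc (S.Φ N - Polynomial.X^N).degree < (S.Φ N).degree := hlt
        _ = (N : WithBot ℕ) := by rw [Polynomial.degree_eq_natDegree hΦ0, S.Φ_deg N]
  have hrdeg : (S.Φ N - q).natDegree < N := by
    have heq : S.Φ N - q = (S.Φ N - Polynomial.X^N) - ∑ j ∈ Finset.range N, Polynomial.C (u j) * P j := by
      rw [hq]; ring
    rw [heq]
    refine lt_of_le_of_lt (Polynomial.natDegree_sub_le _ _) ?_
    exact max_lt hd1 (lt_of_le_of_lt hsumdeg (by omega))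
  -- orthogonality of H against low lbase
  set H : ℂ → ℂ := fun t => a * S.L (N+1) t + w * S.L N t with hHdef
  have hnH : Nice H := Nice.add (Nice.const_mul a (nice_L S (N+1))) (Nice.const_mul w (nice_L S N))
  have horthH : ∀ j, j < N → innerR S.μ (lbase j) H = 0 := by
    intro j hj
    have hrw : innerR S.μ (lbase j) H
        = a * innerR S.μ (S.L (N+1)) (lbase j) + w * innerR S.μ (S.L N) (lbase j) := by
      rw [innerR_comm, hHdef,
        innerR_add_left S.μ (Nice.const_mul a (nice_L S (N+1))) (Nice.const_mul w (nice_L S N)) (nice_lbase j),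
        innerR_const_mul_left, innerR_const_mul_left]
    rw [hrw, innerR_comm S.μ (S.L (N+1)), innerR_comm S.μ (S.L N),
      orth_lbase_L S (show j < N+1 by omega), orth_lbase_L S hj, mul_zero, mul_zero, add_zero]
  -- orthogonality of q
  have hq_orth : ∀ k, k < N → innerC S.μ (fun z => z^k) (fun z => q.eval z) = 0 := by
    intro k hk
    by_cases hkn : k ≤ n-1
    · rcases Nat.eq_zero_or_pos (n-1-k) with ht0 | ht1
      · have hkeq : k = n-1 := by omega
        have hpt : ∀ s : ℝ, (starRingEnd ℂ) ((ec s)^k) * q.eval (ec s) = lbase 0 (ec s) * H (ec s) := by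
          intro s
          rw [hq_ev _ (ec_ne_zero s), map_pow, conj_ec, lbase_zero_eq_one, one_mul, hkeq,
            inv_pow, inv_mul_cancel_left₀ (pow_ne_zero _ (ec_ne_zero s))]
        calc innerC S.μ (fun z => z^k) (fun z => q.eval z)
            = innerR S.μ (lbase 0) H := by
              rw [innerC_def', innerR_def']
              congr 1; funext s; exact hpt s
          _ = 0 := horthH 0 (by omega)
      · set tt := n-1-k with htt
        have h2tt : 1 ≤ tt := ht1
        have hpt : ∀ s : ℝ, (starRingEnd ℂ) ((ec s)^k) * q.eval (ec s)
            = (lbase (2*tt) (ec s) + Complex.I * lbase (2*tt-1) (ec s)) * H (ec s) := by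
          intro s
          rw [hq_ev _ (ec_ne_zero s), map_pow, conj_ec, lbase_combo_pos tt h2tt, inv_pow]
          have hid : ((ec s)^k)⁻¹ * ((ec s)^(n-1)) = (ec s)^tt := by
            rw [htt, pow_sub₀ _ (ec_ne_zero s) hkn]
            ring
          rw [← mul_assoc, hid]
        calc innerC S.μ (fun z => z^k) (fun z => q.eval z)
            = innerR S.μ (fun z => lbase (2*tt) z + Complex.I * lbase (2*tt-1) z) H := by
              rw [innerC_def', innerR_def']
              congr 1; funext s; exact hpt s
          _ = innerR S.μ (lbase (2*tt)) H + Complex.I * innerR S.μ (lbase (2*tt-1)) H := by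
              rw [innerR_add_left S.μ (nice_lbase _) (Nice.const_mul _ (nice_lbase _)) hnH,
                innerR_const_mul_left]
          _ = 0 := by
              rw [horthH _ (by omega), horthH _ (by omega), mul_zero, add_zero]
    · set tt := k-(n-1) with htt
      have h2tt : 1 ≤ tt := by omega
      have httle : tt ≤ n-1 := by omega
      have hpt : ∀ s : ℝ, (starRingEnd ℂ) ((ec s)^k) * q.eval (ec s)
          = (lbase (2*tt) (ec s) - Complex.I * lbase (2*tt-1) (ec s)) * H (ec s) := by
        intro s
        rw [hq_ev _ (ec_ne_zero s), map_pow, conj_ec, lbase_combo_neg tt h2tt, inv_pow]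
        have hid : ((ec s)^k)⁻¹ * ((ec s)^(n-1)) = ((ec s)⁻¹)^tt := by
          have hk' : k = tt + (n-1) := by omega
          rw [hk', pow_add, inv_pow, mul_inv, mul_assoc,
            inv_mul_cancel₀ (pow_ne_zero _ (ec_ne_zero s)), mul_one]
        rw [← mul_assoc, hid]
      calc innerC S.μ (fun z => z^k) (fun z => q.eval z)
          = innerR S.μ (fun z => lbase (2*tt) z - Complex.I * lbase (2*tt-1) z) H := by
            rw [innerC_def', innerR_def']
            congr 1; funext s; exact hpt s
        _ = innerR S.μ (lbase (2*tt)) H - Complex.I * innerR S.μ (lbase (2*tt-1)) H := by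
            rw [innerR_sub_left S.μ (nice_lbase _) (Nice.const_mul _ (nice_lbase _)) hnH,
              innerR_const_mul_left]
        _ = 0 := by
            rw [horthH _ (by omega), horthH _ (by omega), mul_zero, sub_zero]
  -- the residual is zero
  have hr_orth : ∀ k, k < N → innerC S.μ (fun z => z^k) (fun z => (S.Φ N - q).eval z) = 0 := by
    intro k hk
    have hfeq : (fun z : ℂ => (S.Φ N - q).eval z) = fun z => (S.Φ N).eval z - q.eval z := by
      funext t; simp
    rw [hfeq, innerC_sub_right S.μ (nice_pow k) (nice_poly _) (nice_poly _),
      S.Φ_orth N k hk, hq_orth k hk, sub_zero]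
  have hrr : innerC S.μ (fun z => (S.Φ N - q).eval z) (fun z => (S.Φ N - q).eval z) = 0 := by
    have hfeq : (fun z : ℂ => (S.Φ N - q).eval z)
        = fun z => ∑ k ∈ Finset.range N, (S.Φ N - q).coeff k * z^k := by
      funext t; exact Polynomial.eval_eq_sum_range' hrdeg t
    nth_rewrite 1 [hfeq]
    rw [innerC_sum_left' S.μ _ _ _ (fun j _ => nice_pow j) _ (nice_poly _)]
    refine Finset.sum_eq_zero fun k hk => ?_
    rw [hr_orth k (Finset.mem_range.1 hk), mul_zero]
  have hΦq : S.Φ N = q := sub_eq_zero.1 (S.nontriv _ hrr)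
  rw [hΦq, hq_ev z hz]



/-- Theorem 5.17 (first identity): at a zero `θ'` of `π_n`,
`Φ_{2n-1}(e^{iθ'}) = a_n e^{i(n-1)θ'} σ_n(e^{iθ'})`, i.e. `a_n⁻¹ = e^{i(n-1)θ'} σ_n(e^{iθ'})/Φ_{2n-1}(e^{iθ'})`. -/
theorem stmt13 (S : OTPSetup) (n : ℕ) (hn : 1 ≤ n) (θ : ℝ)
    (hθ : θ ∈ Set.Ico (0 : ℝ) (2 * Real.pi))
    (hzero : S.π n (Complex.exp (θ * Complex.I)) = 0) :
    (S.Φ (2 * n - 1)).eval (Complex.exp (θ * Complex.I))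
        = (S.a n : ℂ) * (Complex.exp (θ * Complex.I)) ^ (n - 1) * S.σ n (Complex.exp (θ * Complex.I))
      ∧ (S.a n : ℂ)⁻¹
        = (Complex.exp (θ * Complex.I)) ^ (n - 1) * S.σ n (Complex.exp (θ * Complex.I))
            / (S.Φ (2 * n - 1)).eval (Complex.exp (θ * Complex.I)) := by
  haveI := S.prob
  have hz : Complex.exp (θ * Complex.I) ≠ 0 := Complex.exp_ne_zero _
  have h1 := key_identity S n hn (Complex.exp (θ * Complex.I)) hz
  rw [← S.σ_def n hn, ← S.π_def n hn, hzero, mul_zero, add_zero] at h1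
  have first : (S.Φ (2 * n - 1)).eval (Complex.exp (θ * Complex.I))
      = (S.a n : ℂ) * (Complex.exp (θ * Complex.I)) ^ (n - 1)
        * S.σ n (Complex.exp (θ * Complex.I)) := by
    rw [h1]; ring
  refine ⟨first, ?_⟩
  have ha : ((S.a n : ℝ) : ℂ) ≠ 0 := by exact_mod_cast (S.a_pos n).ne'
  have hΦ : (S.Φ (2*n-1)).eval (Complex.exp (θ*Complex.I)) ≠ 0 := by
    apply phi_ne_zero
    rw [show Complex.exp (θ*Complex.I) = ec θ from rfl, conj_ec]
    exact inv_mul_cancel₀ (ec_ne_zero θ)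
  have hXne : (Complex.exp (θ*Complex.I))^(n-1) * S.σ n (Complex.exp (θ*Complex.I)) ≠ 0 := by
    intro h0
    apply hΦ
    rw [first, mul_assoc, h0, mul_zero]
  rw [first, mul_assoc, eq_div_iff (mul_ne_zero ha hXne), ← mul_assoc,
    inv_mul_cancel₀ ha, one_mul]
end
end

section
/- With the notation above, if θ ∈ [0,2π) is a zero of σ_n (i.e. σ_n(e^{iθ}) = 0), then 2κ_{2n}² b_n i = e^{inθ} π_n(e^{iθ}) / Φ*_{2n}(e^{iθ}), where Φ*_{2n} is the reversed polynomial of the monic OPUC Φ_{2n}; in particular Φ*_{2n}(e^{iθ}) ≠ 0 and π_n(e^{iθ}) ≠ 0. -/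
open MeasureTheory Complex Polynomial

noncomputable section

namespace OTP

def e (θ : ℝ) : ℂ := Complex.exp (θ * Complex.I)

lemma e_ne (θ : ℝ) : e θ ≠ 0 := Complex.exp_ne_zero _

lemma conj_e (θ : ℝ) : (starRingEnd ℂ) (e θ) = (e θ)⁻¹ := by
  rw [e, ← Complex.exp_conj, ← Complex.exp_neg]
  congr 1
  simp only [map_mul, Complex.conj_ofReal, Complex.conj_I]
  ring

lemma abs_e (θ : ℝ) : ‖e θ‖ = 1 := Complex.norm_exp_ofReal_mul_I θ

def E (m : ℤ) (θ : ℝ) : ℂ := e θ ^ m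

lemma E_ne (m : ℤ) (θ : ℝ) : E m θ ≠ 0 := zpow_ne_zero _ (e_ne θ)

lemma E_mul (m l : ℤ) (θ : ℝ) : E m θ * E l θ = E (m + l) θ := (zpow_add₀ (e_ne θ) m l).symm

lemma conj_E (m : ℤ) (θ : ℝ) : (starRingEnd ℂ) (E m θ) = E (-m) θ := by
  rw [E, map_zpow₀, conj_e, E, inv_zpow, ← zpow_neg]

lemma abs_E (m : ℤ) (θ : ℝ) : ‖E m θ‖ = 1 := by
  rw [E, norm_zpow, abs_e, one_zpow]

lemma E_zero (θ : ℝ) : E 0 θ = 1 := rfl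

lemma E_natCast (k : ℕ) (θ : ℝ) : E (k : ℤ) θ = e θ ^ k := zpow_natCast _ _

lemma E_neg_natCast (k : ℕ) (θ : ℝ) : E (-(k : ℤ)) θ = ((e θ)⁻¹) ^ k := by
  rw [E, zpow_neg, zpow_natCast, inv_pow]

lemma lbase_even (k : ℕ) (θ : ℝ) :
    lbase (2 * k) (e θ) = (E k θ + E (-(k : ℤ)) θ) / 2 := by
  rw [lbase, if_pos (even_two_mul k)]
  rw [E_natCast, E_neg_natCast]
  norm_num

lemma lbase_odd (k : ℕ) (θ : ℝ) :
    lbase (2 * k + 1) (e θ) = (E (k + 1 : ℕ) θ - E (-((k : ℤ) + 1)) θ) / (2 * Complex.I) := by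
  rw [lbase, if_neg (by simp [parity_simps])]
  have h1 : (2 * k + 1 + 1) / 2 = k + 1 := by omega
  rw [h1, E_natCast]
  have : -((k : ℤ) + 1) = -((k + 1 : ℕ) : ℤ) := by push_cast; ring
  rw [this, E_neg_natCast]

/-- bounded continuous predicate -/
def BC (F : ℝ → ℂ) : Prop := Continuous F ∧ ∃ C, ∀ θ, ‖F θ‖ ≤ C

lemma BC.add {F G : ℝ → ℂ} (hF : BC F) (hG : BC G) : BC (fun θ => F θ + G θ) := by
  obtain ⟨hFc, C, hC⟩ := hF; obtain ⟨hGc, D, hD⟩ := hG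
  exact ⟨hFc.add hGc, C + D, fun θ => (norm_add_le _ _).trans (add_le_add (hC θ) (hD θ))⟩

lemma BC.mul {F G : ℝ → ℂ} (hF : BC F) (hG : BC G) : BC (fun θ => F θ * G θ) := by
  obtain ⟨hFc, C, hC⟩ := hF; obtain ⟨hGc, D, hD⟩ := hG
  refine ⟨hFc.mul hGc, C * D, fun θ => ?_⟩
  rw [norm_mul]
  exact mul_le_mul (hC θ) (hD θ) (norm_nonneg _) ((norm_nonneg _).trans (hC θ))

lemma BC.const (c : ℂ) : BC (fun _ => c) := ⟨continuous_const, ‖c‖, fun _ => le_rfl⟩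

lemma BC.zero : BC (fun _ => (0 : ℂ)) := BC.const 0

lemma BC.neg {F : ℝ → ℂ} (hF : BC F) : BC (fun θ => -F θ) := by
  obtain ⟨hFc, C, hC⟩ := hF
  exact ⟨hFc.neg, C, fun θ => by simpa using hC θ⟩

lemma BC.sub {F G : ℝ → ℂ} (hF : BC F) (hG : BC G) : BC (fun θ => F θ - G θ) := by
  simpa [sub_eq_add_neg] using hF.add hG.neg

lemma BC.conj {F : ℝ → ℂ} (hF : BC F) : BC (fun θ => (starRingEnd ℂ) (F θ)) := by
  obtain ⟨hFc, C, hC⟩ := hF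
  exact ⟨Complex.continuous_conj.comp hFc, C, fun θ => by simpa using hC θ⟩

lemma BC.sum {s : Finset ℕ} {F : ℕ → ℝ → ℂ} (h : ∀ i ∈ s, BC (F i)) :
    BC (fun θ => ∑ i ∈ s, F i θ) := by
  classical
  induction s using Finset.induction with
  | empty => simpa using BC.zero
  | @insert a s' hx ih =>
    simp only [Finset.sum_insert hx]
    exact (h a (Finset.mem_insert_self a s')).add
      (ih fun i hi => h i (Finset.mem_insert_of_mem hi))

lemma BC_E (m : ℤ) : BC (E m) := by
  refine ⟨?_, 1, fun θ => (abs_E m θ).le⟩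
  have : E m = fun (θ : ℝ) => Complex.exp ((m : ℂ) * (θ * Complex.I)) := by
    funext θ; rw [E, e, Complex.exp_int_mul]
  rw [this]
  exact Complex.continuous_exp.comp (continuous_const.mul (Complex.continuous_ofReal.mul continuous_const))

lemma BC_lbase (j : ℕ) : BC (fun θ => lbase j (e θ)) := by
  rcases Nat.even_or_odd j with ⟨k, hk⟩ | ⟨k, hk⟩
  · have : (fun θ => lbase j (e θ)) = fun θ => (E k θ + E (-(k : ℤ)) θ) * (2 : ℂ)⁻¹ := by
      funext θ; rw [hk, ← two_mul, lbase_even]; ring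
    rw [this]
    exact ((BC_E k).add (BC_E _)).mul (BC.const _)
  · have : (fun θ => lbase j (e θ))
        = fun θ => (E (k + 1 : ℕ) θ - E (-((k : ℤ) + 1)) θ) * (2 * Complex.I)⁻¹ := by
      funext θ; rw [hk, lbase_odd]; ring
    rw [this]
    exact ((BC_E _).sub (BC_E _)).mul (BC.const _)

lemma BC_poly (p : Polynomial ℂ) : BC (fun θ => p.eval (e θ)) := by
  constructor
  · exact p.continuous.comp (Complex.continuous_exp.comp
      (Complex.continuous_ofReal.mul continuous_const))
  · refine ⟨∑ k ∈ Finset.range (p.natDegree + 1), ‖p.coeff k‖, fun θ => ?_⟩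
    simp only []
    rw [Polynomial.eval_eq_sum_range]
    refine (norm_sum_le _ _).trans ?_
    refine Finset.sum_le_sum fun k _ => ?_
    rw [norm_mul, norm_pow, abs_e, one_pow, mul_one]

lemma BC_spanR {N : ℕ} {f : ℂ → ℂ} (hf : f ∈ Submodule.span ℝ (lbase '' Set.Iic N)) :
    BC (fun θ => f (e θ)) := by
  induction hf using Submodule.span_induction with
  | mem x hx => obtain ⟨j, _, rfl⟩ := hx; exact BC_lbase j
  | zero => exact BC.zero
  | add x y hx hy ihx ihy => exact ihx.add ihy
  | smul c x hx ih =>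
    have : (fun θ => (c • x) (e θ)) = fun θ => (c : ℂ) * x (e θ) := by
      funext θ; simp [Complex.real_smul]
    rw [this]; exact (BC.const _).mul ih

lemma BC.integrable {μ : Measure ℝ} [IsFiniteMeasure μ] {F : ℝ → ℂ} (h : BC F) :
    Integrable F μ := by
  obtain ⟨hc, C, hC⟩ := h
  refine (integrable_const C).mono' hc.aestronglyMeasurable ?_
  exact Filter.Eventually.of_forall fun θ => by simpa using hC θ

end OTP

namespace OTP

abbrev BCe (f : ℂ → ℂ) : Prop := BC (fun θ => f (e θ))

lemma innerR_def' (μ : Measure ℝ) (f g : ℂ → ℂ) :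
    innerR μ f g = ∫ θ, f (e θ) * g (e θ) ∂μ := rfl

lemma innerC_def' (μ : Measure ℝ) (f g : ℂ → ℂ) :
    innerC μ f g = ∫ θ, (starRingEnd ℂ) (f (e θ)) * g (e θ) ∂μ := rfl

lemma innerC_conj_symm (μ : Measure ℝ) (f g : ℂ → ℂ) :
    innerC μ f g = (starRingEnd ℂ) (innerC μ g f) := by
  rw [innerC_def', innerC_def', ← integral_conj]
  congr 1; funext θ
  rw [map_mul, Complex.conj_conj]; ring

lemma innerC_monomial (μ : Measure ℝ) (k : ℕ) (g : ℂ → ℂ) :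
    innerC μ (fun z => z ^ k) g = ∫ θ, E (-(k : ℤ)) θ * g (e θ) ∂μ := by
  rw [innerC_def']
  congr 1; funext θ
  rw [map_pow, conj_e, ← E_neg_natCast]

lemma innerC_smul_right (μ : Measure ℝ) (c : ℂ) (f g : ℂ → ℂ) :
    innerC μ f (fun z => c * g z) = c * innerC μ f g := by
  rw [innerC_def', innerC_def', ← smul_eq_mul, ← integral_smul]
  congr 1; funext θ; simp [smul_eq_mul]; ring

lemma innerC_smul_left (μ : Measure ℝ) (c : ℂ) (f g : ℂ → ℂ) :
    innerC μ (fun z => c * f z) g = (starRingEnd ℂ) c * innerC μ f g := by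
  rw [innerC_def', innerC_def', ← smul_eq_mul, ← integral_smul]
  congr 1; funext θ; simp [smul_eq_mul]; ring

lemma innerC_add_right (μ : Measure ℝ) [IsFiniteMeasure μ] (f g₁ g₂ : ℂ → ℂ)
    (hf : BCe f) (hg₁ : BCe g₁) (hg₂ : BCe g₂) :
    innerC μ f (fun z => g₁ z + g₂ z) = innerC μ f g₁ + innerC μ f g₂ := by
  rw [innerC_def', innerC_def', innerC_def', ← integral_add (hf.conj.mul hg₁).integrable
    (hf.conj.mul hg₂).integrable]
  congr 1; funext θ; ring

lemma innerC_add_left (μ : Measure ℝ) [IsFiniteMeasure μ] (f₁ f₂ g : ℂ → ℂ)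
    (hf₁ : BCe f₁) (hf₂ : BCe f₂) (hg : BCe g) :
    innerC μ (fun z => f₁ z + f₂ z) g = innerC μ f₁ g + innerC μ f₂ g := by
  rw [innerC_def', innerC_def', innerC_def', ← integral_add (hf₁.conj.mul hg).integrable
    (hf₂.conj.mul hg).integrable]
  congr 1; funext θ; rw [map_add]; ring

lemma innerC_poly_left (μ : Measure ℝ) [IsFiniteMeasure μ] (p : Polynomial ℂ) (g : ℂ → ℂ)
    (hg : BCe g) :
    innerC μ (fun z => p.eval z) g
      = ∑ k ∈ Finset.range (p.natDegree + 1),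
          (starRingEnd ℂ) (p.coeff k) * innerC μ (fun z => z ^ k) g := by
  have step : ∀ k, (starRingEnd ℂ) (p.coeff k) * innerC μ (fun z => z ^ k) g
      = ∫ θ, (starRingEnd ℂ) (p.coeff k * (e θ) ^ k) * g (e θ) ∂μ := by
    intro k
    rw [innerC_def', ← smul_eq_mul, ← integral_smul]
    congr 1; funext θ; simp [smul_eq_mul]; ring
  calc innerC μ (fun z => p.eval z) g
      = ∫ θ, ∑ k ∈ Finset.range (p.natDegree + 1),
          (starRingEnd ℂ) (p.coeff k * (e θ) ^ k) * g (e θ) ∂μ := by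
        rw [innerC_def']; congr 1; funext θ
        rw [Polynomial.eval_eq_sum_range, map_sum, Finset.sum_mul]
    _ = ∑ k ∈ Finset.range (p.natDegree + 1),
          ∫ θ, (starRingEnd ℂ) (p.coeff k * (e θ) ^ k) * g (e θ) ∂μ := by
        refine integral_finset_sum _ fun k _ => ?_
        refine BC.integrable ?_
        exact (((BC.const (p.coeff k)).mul ⟨(Complex.continuous_exp.comp
          (Complex.continuous_ofReal.mul continuous_const)).pow k, 1, fun θ => by
            rw [Pi.pow_apply, norm_pow]; exact pow_le_one₀ (norm_nonneg _) (abs_e θ).le⟩).conj).mul hg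
    _ = _ := by
        refine (Finset.sum_congr rfl fun k _ => ?_).symm
        exact step k

end OTP

namespace OTP

/-- Evaluation of the conjugate-reversed polynomial on the unit circle. -/
lemma srev_eval (p : Polynomial ℂ) (θ : ℝ) :
    (srev p).eval (e θ) = (e θ) ^ ((p.map (starRingEnd ℂ)).natDegree)
      * (starRingEnd ℂ) (p.eval (e θ)) := by
  set q := p.map (starRingEnd ℂ) with hq
  set x := e θ with hx
  have hx0 : x ≠ 0 := e_ne θ
  letI : Invertible (x⁻¹) := invertibleOfNonzero (inv_ne_zero hx0)
  have h := Polynomial.eval₂_reverse_mul_pow (RingHom.id ℂ) (x⁻¹) q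
  have hinv : (⅟(x⁻¹) : ℂ) = x := by
    rw [invOf_eq_inv, inv_inv]
  rw [hinv] at h
  have heval : ∀ (r : Polynomial ℂ) (y : ℂ), Polynomial.eval₂ (RingHom.id ℂ) y r = r.eval y :=
    fun r y => rfl
  rw [heval, heval] at h
  have hqx : q.eval (x⁻¹) = (starRingEnd ℂ) (p.eval x) := by
    have hcx : (starRingEnd ℂ) x = x⁻¹ := conj_e θ
    have := Polynomial.hom_eval₂ p (RingHom.id ℂ) (starRingEnd ℂ) x
    rw [RingHomCompTriple.comp_eq] at this
    rw [hq, Polynomial.eval_map, ← hcx, ← this]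
    rfl
  rw [← hqx, ← h]
  have : srev p = q.reverse := by rw [srev, hq]
  rw [this]
  field_simp
  rw [mul_assoc, ← mul_pow, mul_one_div_cancel hx0, one_pow, mul_one]

variable (S : OTPSetup)

lemma BC_L (m : ℕ) : BC (fun θ => S.L m (e θ)) := BC_spanR (S.mem_span m)

lemma innerR_L_eq_zero {j m : ℕ} (hjm : j < m) {f : ℂ → ℂ}
    (hf : f ∈ Submodule.span ℝ (S.L '' Set.Iic j)) : innerR S.μ f (S.L m) = 0 := by
  haveI := S.prob
  have key : BC (fun θ => f (e θ)) ∧ innerR S.μ f (S.L m) = 0 := by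
    induction hf using Submodule.span_induction with
    | mem x hx =>
      obtain ⟨i, hi, rfl⟩ := hx
      refine ⟨BC_L S i, ?_⟩
      have hi' := Set.mem_Iic.1 hi
      rw [S.orthonormal i m, if_neg (by omega : ¬ i = m)]
    | zero => exact ⟨BC.zero, by simp [innerR_def']⟩
    | add x y hx hy ihx ihy =>
      refine ⟨ihx.1.add ihy.1, ?_⟩
      have : innerR S.μ (x + y) (S.L m) = innerR S.μ x (S.L m) + innerR S.μ y (S.L m) := by
        rw [innerR_def', innerR_def', innerR_def',
          ← integral_add (ihx.1.mul (BC_L S m)).integrable (ihy.1.mul (BC_L S m)).integrable]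
        congr 1; funext θ; simp [add_mul]
      rw [this, ihx.2, ihy.2, add_zero]
    | smul c x hx ih =>
      have hsm : BC (fun θ => (c • x) (e θ)) := by
        have : (fun θ => (c • x) (e θ)) = fun θ => (c : ℂ) * x (e θ) := by
          funext θ; simp [Complex.real_smul]
        rw [this]; exact (BC.const _).mul ih.1
      refine ⟨hsm, ?_⟩
      have : innerR S.μ (c • x) (S.L m) = (c : ℂ) * innerR S.μ x (S.L m) := by
        rw [innerR_def', innerR_def', ← smul_eq_mul, ← integral_smul]
        congr 1; funext θ; simp [Complex.real_smul, smul_eq_mul]; ring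
      rw [this, ih.2, mul_zero]
  exact key.2

lemma lbase_mem_spanL : ∀ m, lbase m ∈ Submodule.span ℝ (S.L '' Set.Iic m) := by
  intro m
  induction m using Nat.strong_induction_on with
  | _ m ih =>
    match m with
    | 0 =>
      have h0 : lbase 0 = S.L 0 := by
        funext z; rw [S.L_zero, lbase]; norm_num
      rw [h0]
      exact Submodule.subset_span ⟨0, Set.mem_Iic.2 le_rfl, rfl⟩
    | Nat.succ k =>
      have himg : lbase '' Set.Iic (k + 1) = insert (lbase (k + 1)) (lbase '' Set.Iic k) := by
        rw [show Set.Iic (k + 1) = insert (k + 1) (Set.Iic k) by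
          ext x; simp [Nat.lt_succ_iff, le_iff_lt_or_eq]; omega]
        rw [Set.image_insert_eq]
      have hL := S.mem_span (k + 1)
      rw [himg] at hL
      obtain ⟨c, z, hz, hzc⟩ := Submodule.mem_span_insert.1 hL
      have hsub : Submodule.span ℝ (lbase '' Set.Iic k) ≤
          Submodule.span ℝ (S.L '' Set.Iic (k + 1)) := by
        rw [Submodule.span_le]
        rintro _ ⟨j, hj, rfl⟩
        have hj' := Set.mem_Iic.1 hj
        have := ih j (by omega)
        exact Submodule.span_mono
          (Set.image_mono (Set.Iic_subset_Iic.2 (by omega : j ≤ k + 1))) this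
      by_cases hc : c = 0
      · exfalso
        rw [hc, zero_smul, zero_add] at hzc
        have hmem : S.L (k + 1) ∈ Submodule.span ℝ (S.L '' Set.Iic k) := by
          rw [hzc]
          have : Submodule.span ℝ (lbase '' Set.Iic k) ≤
              Submodule.span ℝ (S.L '' Set.Iic k) := by
            rw [Submodule.span_le]
            rintro _ ⟨j, hj, rfl⟩
            have hj' := Set.mem_Iic.1 hj
            exact Submodule.span_mono
              (Set.image_mono (Set.Iic_subset_Iic.2 hj)) (ih j (by omega))
          exact this hz
        have h0 := innerR_L_eq_zero S (by omega : k < k + 1) hmem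
        have h1 := S.orthonormal (k + 1) (k + 1)
        rw [if_pos rfl] at h1
        rw [h0] at h1
        exact one_ne_zero h1.symm
      · have : lbase (k + 1) = c⁻¹ • (S.L (k + 1) - z) := by
          have : S.L (k + 1) - z = c • lbase (k + 1) := by rw [hzc]; ring_nf
          rw [this, smul_smul, inv_mul_cancel₀ hc, one_smul]
        rw [this]
        refine Submodule.smul_mem _ _ (Submodule.sub_mem _ ?_ (hsub hz))
        exact Submodule.subset_span ⟨k + 1, Set.mem_Iic.2 le_rfl, rfl⟩

lemma innerR_lbase_L {j m : ℕ} (h : j < m) : innerR S.μ (lbase j) (S.L m) = 0 :=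
  innerR_L_eq_zero S h (lbase_mem_spanL S j)

/-- the exponential-weighted pairing -/
def J (m : ℤ) (f : ℂ → ℂ) : ℂ := ∫ θ, E m θ * f (e θ) ∂S.μ

lemma J_pos (k : ℕ) (hk : 1 ≤ k) (f : ℂ → ℂ) (hf : BCe f) :
    J S k f = innerR S.μ (lbase (2 * k)) f + Complex.I * innerR S.μ (lbase (2 * k - 1)) f := by
  haveI := S.prob
  have hE : ∀ θ, E k θ = lbase (2 * k) (e θ) + Complex.I * lbase (2 * k - 1) (e θ) := by
    intro θ
    obtain ⟨k', rfl⟩ : ∃ k', k = k' + 1 := ⟨k - 1, by omega⟩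
    have h1 : 2 * (k' + 1) - 1 = 2 * k' + 1 := by omega
    rw [h1, lbase_even, lbase_odd]
    have hI : (2 : ℂ) * Complex.I ≠ 0 := by simp [Complex.I_ne_zero]
    field_simp
    push_cast
    ring
  rw [J, innerR_def', innerR_def']
  calc ∫ θ, E (k : ℤ) θ * f (e θ) ∂S.μ
      = ∫ θ, (lbase (2 * k) (e θ) * f (e θ)
          + Complex.I * (lbase (2 * k - 1) (e θ) * f (e θ))) ∂S.μ := by
        congr 1; funext θ; rw [hE θ]; ring
    _ = _ := by
        rw [integral_add ((BC_lbase _).mul hf).integrable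
          (((BC.const Complex.I).mul ((BC_lbase _).mul hf)).integrable),
          integral_const_mul]

lemma J_neg (k : ℕ) (hk : 1 ≤ k) (f : ℂ → ℂ) (hf : BCe f) :
    J S (-(k : ℤ)) f
      = innerR S.μ (lbase (2 * k)) f - Complex.I * innerR S.μ (lbase (2 * k - 1)) f := by
  haveI := S.prob
  have hE : ∀ θ, E (-(k : ℤ)) θ
      = lbase (2 * k) (e θ) - Complex.I * lbase (2 * k - 1) (e θ) := by
    intro θ
    obtain ⟨k', rfl⟩ : ∃ k', k = k' + 1 := ⟨k - 1, by omega⟩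
    have h1 : 2 * (k' + 1) - 1 = 2 * k' + 1 := by omega
    rw [h1, lbase_even, lbase_odd]
    have hI : (2 : ℂ) * Complex.I ≠ 0 := by simp [Complex.I_ne_zero]
    field_simp
    push_cast
    ring
  rw [J, innerR_def', innerR_def']
  calc ∫ θ, E (-(k : ℤ)) θ * f (e θ) ∂S.μ
      = ∫ θ, (lbase (2 * k) (e θ) * f (e θ)
          - Complex.I * (lbase (2 * k - 1) (e θ) * f (e θ))) ∂S.μ := by
        congr 1; funext θ; rw [hE θ]; ring
    _ = _ := by
        rw [integral_sub ((BC_lbase _).mul hf).integrable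
          (((BC.const Complex.I).mul ((BC_lbase _).mul hf)).integrable),
          integral_const_mul]

lemma J_zero_eq (f : ℂ → ℂ) : J S 0 f = innerR S.μ (lbase 0) f := by
  rw [J, innerR_def']
  congr 1; funext θ
  rw [E_zero]
  have : lbase 0 (e θ) = 1 := by rw [lbase]; norm_num
  rw [this]

lemma J_L_small {M : ℕ} {m : ℤ} (h : 2 * m.natAbs < M) : J S m (S.L M) = 0 := by
  rcases Int.natAbs_eq m with hm | hm
  · rcases Nat.eq_zero_or_pos m.natAbs with h0 | h1
    · rw [hm, h0]
      rw [Int.natCast_zero, J_zero_eq, innerR_lbase_L S (by omega)]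
    · rw [hm, J_pos S m.natAbs h1 _ (BC_L S M),
        innerR_lbase_L S (by omega), innerR_lbase_L S (by omega)]
      ring
  · rcases Nat.eq_zero_or_pos m.natAbs with h0 | h1
    · rw [hm, h0]
      show J S (-(0:ℕ) : ℤ) _ = 0
      rw [Nat.cast_zero, neg_zero, J_zero_eq, innerR_lbase_L S (by omega)]
    · rw [hm, J_neg S m.natAbs h1 _ (BC_L S M),
        innerR_lbase_L S (by omega), innerR_lbase_L S (by omega)]
      ring


lemma exists_poly (n : ℕ) {f : ℂ → ℂ}
    (hf : f ∈ Submodule.span ℂ (lbase '' Set.Iic (2 * n))) :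
    ∃ p : Polynomial ℂ, p.natDegree ≤ 2 * n ∧ ∀ θ, p.eval (e θ) = E n θ * f (e θ) := by
  induction hf using Submodule.span_induction with
  | mem x hx =>
    obtain ⟨j, hj, rfl⟩ := hx
    have hj' := Set.mem_Iic.1 hj
    rcases Nat.even_or_odd j with ⟨k, hk⟩ | ⟨k, hk⟩
    · have hkn : k ≤ n := by omega
      refine ⟨Polynomial.C (2 : ℂ)⁻¹ * (Polynomial.X ^ (n + k) + Polynomial.X ^ (n - k)),
        ?_, ?_⟩
      · refine (Polynomial.natDegree_C_mul_le _ _).trans ?_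
        refine (Polynomial.natDegree_add_le _ _).trans ?_
        simp only [Polynomial.natDegree_X_pow]
        omega
      · intro θ
        have h1 : (e θ) ^ (n + k) = E ((n : ℤ) + k) θ := by
          rw [← E_natCast]; congr 1
        have h2 : (e θ) ^ (n - k) = E ((n : ℤ) + -k) θ := by
          rw [← E_natCast]; congr 1; omega
        rw [Polynomial.eval_mul, Polynomial.eval_C, Polynomial.eval_add,
          Polynomial.eval_pow, Polynomial.eval_pow, Polynomial.eval_X, h1, h2,
          hk, show k + k = 2 * k from by ring, lbase_even]
        linear_combination (E_mul (n : ℤ) (k : ℤ) θ + E_mul (n : ℤ) (-(k : ℤ)) θ) / (-2)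
    · have hkn : k + 1 ≤ n := by omega
      refine ⟨Polynomial.C (2 * Complex.I)⁻¹
        * (Polynomial.X ^ (n + (k + 1)) - Polynomial.X ^ (n - (k + 1))), ?_, ?_⟩
      · refine (Polynomial.natDegree_C_mul_le _ _).trans ?_
        refine (Polynomial.natDegree_sub_le _ _).trans ?_
        simp only [Polynomial.natDegree_X_pow]
        omega
      · intro θ
        have h1 : (e θ) ^ (n + (k + 1)) = E ((n : ℤ) + ((k : ℤ) + 1)) θ := by
          rw [← E_natCast]; congr 1
        have h2 : (e θ) ^ (n - (k + 1)) = E ((n : ℤ) + -((k : ℤ) + 1)) θ := by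
          rw [← E_natCast]; congr 1; omega
        have h3 : E ((k + 1 : ℕ) : ℤ) θ = E ((k : ℤ) + 1) θ := by congr 1
        rw [Polynomial.eval_mul, Polynomial.eval_C, Polynomial.eval_sub,
          Polynomial.eval_pow, Polynomial.eval_pow, Polynomial.eval_X, h1, h2,
          hk, lbase_odd, h3]
        linear_combination (E_mul (n : ℤ) (-((k : ℤ) + 1)) θ
          - E_mul (n : ℤ) ((k : ℤ) + 1) θ) * (2 * Complex.I)⁻¹
  | zero => exact ⟨0, by simp, fun θ => by simp⟩
  | add x y hx hy ihx ihy =>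
    obtain ⟨p, hp1, hp2⟩ := ihx
    obtain ⟨r, hr1, hr2⟩ := ihy
    refine ⟨p + r, (Polynomial.natDegree_add_le _ _).trans (by omega), fun θ => ?_⟩
    rw [Polynomial.eval_add, hp2, hr2]
    show _ = E n θ * (x (e θ) + y (e θ))
    ring
  | smul c x hx ih =>
    obtain ⟨p, hp1, hp2⟩ := ih
    refine ⟨Polynomial.C c * p, (Polynomial.natDegree_C_mul_le _ _).trans hp1, fun θ => ?_⟩
    rw [Polynomial.eval_mul, Polynomial.eval_C, hp2]
    show _ = E n θ * (c • x (e θ))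
    rw [smul_eq_mul]
    ring

lemma Phi_ne (m : ℕ) (hm : 1 ≤ m) (θ : ℝ) : (S.Φ m).eval (e θ) ≠ 0 := by
  haveI := S.prob
  intro h0
  set w := e θ with hw
  obtain ⟨q, hq⟩ := (Polynomial.dvd_iff_isRoot).2 h0
  have hq0 : q ≠ 0 := by
    intro h; rw [h, mul_zero] at hq; exact (S.Φ_monic m).ne_zero hq
  have hXC : (Polynomial.X - Polynomial.C w) ≠ 0 := Polynomial.X_sub_C_ne_zero w
  have hdeg : q.natDegree < m := by
    have h2 := Polynomial.natDegree_mul hXC hq0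
    rw [← hq, S.Φ_deg m, Polynomial.natDegree_X_sub_C] at h2
    omega
  have hqΦ : innerC S.μ (fun z => q.eval z) (fun z => (S.Φ m).eval z) = 0 := by
    rw [innerC_poly_left S.μ q _ (BC_poly _)]
    refine Finset.sum_eq_zero fun k hk => ?_
    rw [S.Φ_orth m k (by have := Finset.mem_range.1 hk; omega), mul_zero]
  have hΦq : innerC S.μ (fun z => (S.Φ m).eval z) (fun z => q.eval z) = 0 := by
    rw [innerC_conj_symm, hqΦ, map_zero]
  have hG : innerC S.μ (fun z => z * q.eval z) (fun z => z * q.eval z)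
      = innerC S.μ (fun z => q.eval z) (fun z => q.eval z) := by
    rw [innerC_def', innerC_def']
    congr 1; funext θ'
    have h1 : (starRingEnd ℂ) (e θ') * e θ' = 1 := by
      rw [conj_e]; exact inv_mul_cancel₀ (e_ne θ')
    rw [map_mul]
    calc (starRingEnd ℂ) (e θ') * (starRingEnd ℂ) (q.eval (e θ')) * (e θ' * q.eval (e θ'))
        = ((starRingEnd ℂ) (e θ') * e θ')
            * ((starRingEnd ℂ) (q.eval (e θ')) * q.eval (e θ')) := by ring
      _ = _ := by rw [h1, one_mul]
  have hBq : BCe (fun z => q.eval z) := BC_poly q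
  have hBΦ : BCe (fun z => (S.Φ m).eval z) := BC_poly _
  have hBwq : BCe (fun z => w * q.eval z) := (BC.const w).mul hBq
  have hww : (starRingEnd ℂ) w * w = 1 := by
    rw [hw, conj_e]; exact inv_mul_cancel₀ (e_ne θ)
  have hexp : innerC S.μ (fun z => z * q.eval z) (fun z => z * q.eval z)
      = innerC S.μ (fun z => (S.Φ m).eval z) (fun z => (S.Φ m).eval z)
        + innerC S.μ (fun z => q.eval z) (fun z => q.eval z) := by
    have hfun : (fun z : ℂ => z * q.eval z)
        = fun z => (S.Φ m).eval z + w * q.eval z := by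
      funext z
      have h3 : (S.Φ m).eval z = (z - w) * q.eval z := by
        rw [hq, Polynomial.eval_mul, Polynomial.eval_sub, Polynomial.eval_X,
          Polynomial.eval_C]
      rw [h3]; ring
    rw [hfun]
    rw [innerC_add_left S.μ _ _ _ hBΦ hBwq (hBΦ.add hBwq)]
    rw [innerC_add_right S.μ _ _ _ hBΦ hBΦ hBwq]
    rw [innerC_add_right S.μ _ _ _ hBwq hBΦ hBwq]
    rw [innerC_smul_right S.μ w _ _, hΦq]
    rw [innerC_smul_left S.μ w _ _, hqΦ]
    have : innerC S.μ (fun z => w * q.eval z) (fun z => w * q.eval z)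
        = (starRingEnd ℂ) w * (w * innerC S.μ (fun z => q.eval z) (fun z => q.eval z)) := by
      rw [innerC_smul_left S.μ w _ _, innerC_smul_right S.μ w _ _]
    rw [this, show (starRingEnd ℂ) w * (w * innerC S.μ (fun z => q.eval z) (fun z => q.eval z))
        = innerC S.μ (fun z => q.eval z) (fun z => q.eval z) from by
      rw [← mul_assoc, hww, one_mul]]
    ring
  have hzero : innerC S.μ (fun z => (S.Φ m).eval z) (fun z => (S.Φ m).eval z) = 0 := by
    have h4 := hG.symm.trans hexp
    linear_combination -h4
  have h5 := S.κ_def m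
  rw [hzero, mul_zero] at h5
  exact zero_ne_one h5

end OTP

namespace OTP
lemma BC_epow (k : ℕ) : BC (fun θ => (e θ) ^ k) := by
  have : (fun θ => (e θ) ^ k) = E (k : ℤ) := by funext θ; rw [E_natCast]
  rw [this]; exact BC_E _
end OTP


open OTP

/-- Theorem 5.17 (last identity): at a zero `θ` of `σ_n`,
`2κ_{2n}² b_n i = e^{inθ} π_n(e^{iθ}) / Φ*_{2n}(e^{iθ})`, with nonvanishing denominators. -/
theorem stmt14 (S : OTPSetup) (n : ℕ) (hn : 1 ≤ n) (θ : ℝ)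
    (hθ : θ ∈ Set.Ico (0 : ℝ) (2 * Real.pi))
    (hzero : S.σ n (Complex.exp (θ * Complex.I)) = 0) :
    2 * (S.κ (2 * n) : ℂ) ^ 2 * (S.b n : ℂ) * Complex.I
        = (Complex.exp (θ * Complex.I)) ^ n * S.π n (Complex.exp (θ * Complex.I))
            / (srev (S.Φ (2 * n))).eval (Complex.exp (θ * Complex.I))
      ∧ (srev (S.Φ (2 * n))).eval (Complex.exp (θ * Complex.I)) ≠ 0
      ∧ S.π n (Complex.exp (θ * Complex.I)) ≠ 0 := by
  classical
  haveI := S.prob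
  have hσL : S.σ n = S.L (2 * n) := S.σ_def n hn
  have hπL : S.π n = S.L (2 * n - 1) := S.π_def n hn
  -- constants
  set aC : ℂ := (S.a n : ℂ) with haC
  set bC : ℂ := (S.b n : ℂ) with hbC
  set βC : ℂ := (S.β n : ℂ) with hβC
  set κC : ℂ := (S.κ (2 * n) : ℂ) with hκC
  have ha0 : aC ≠ 0 := by
    rw [haC, Complex.ofReal_ne_zero]; exact (S.a_pos n).ne'
  have hb0 : bC ≠ 0 := by
    rw [hbC, Complex.ofReal_ne_zero]; exact (S.b_pos n).ne'
  have hκ0 : κC ≠ 0 := by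
    rw [hκC, Complex.ofReal_ne_zero]; exact (S.κ_pos (2 * n)).ne'
  set c₁ : ℂ := aC⁻¹ * (1 + βC * Complex.I) with hc₁
  set c₂ : ℂ := -Complex.I * bC⁻¹ with hc₂
  -- polynomials representing zⁿ σ and zⁿ π on the circle
  have hspanσ : S.L (2 * n) ∈
      Submodule.restrictScalars ℝ (Submodule.span ℂ (lbase '' Set.Iic (2 * n))) :=
    Submodule.span_subset_span ℝ ℂ _ (S.mem_span (2 * n))
  have hspanπ : S.L (2 * n - 1) ∈
      Submodule.restrictScalars ℝ (Submodule.span ℂ (lbase '' Set.Iic (2 * n))) := by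
    refine Submodule.span_subset_span ℝ ℂ _ ?_
    exact Submodule.span_mono (Set.image_mono (Set.Iic_subset_Iic.2 (by omega)))
      (S.mem_span (2 * n - 1))
  obtain ⟨p₁, hp₁d, hp₁⟩ := OTP.exists_poly n hspanσ
  obtain ⟨p₂, hp₂d, hp₂⟩ := OTP.exists_poly n hspanπ
  set P : Polynomial ℂ := Polynomial.C c₁ * p₁ + Polynomial.C c₂ * p₂ with hP
  have hPdeg : P.natDegree ≤ 2 * n := by
    refine (Polynomial.natDegree_add_le _ _).trans ?_
    exact max_le ((Polynomial.natDegree_C_mul_le _ _).trans hp₁d)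
      ((Polynomial.natDegree_C_mul_le _ _).trans hp₂d)
  have hPeval : ∀ t : ℝ, P.eval (e t)
      = E (n : ℤ) t * (c₁ * S.L (2 * n) (e t) + c₂ * S.L (2 * n - 1) (e t)) := by
    intro t
    rw [hP, Polynomial.eval_add, Polynomial.eval_mul, Polynomial.eval_mul,
      Polynomial.eval_C, Polynomial.eval_C, hp₁ t, hp₂ t]
    ring
  -- inner products of monomials against P
  have hPip : ∀ k : ℕ, innerC S.μ (fun w => w ^ k) (fun w => P.eval w)
      = c₁ * OTP.J S ((n : ℤ) - k) (S.L (2 * n))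
        + c₂ * OTP.J S ((n : ℤ) - k) (S.L (2 * n - 1)) := by
    intro k
    rw [OTP.innerC_monomial]
    have hpt : ∀ t, E (-(k : ℤ)) t * P.eval (e t)
        = c₁ * (E ((n : ℤ) - k) t * S.L (2 * n) (e t))
          + c₂ * (E ((n : ℤ) - k) t * S.L (2 * n - 1) (e t)) := by
      intro t
      rw [hPeval t]
      have hEE : E (-(k : ℤ)) t * E (n : ℤ) t = E ((n : ℤ) - k) t := by
        rw [E_mul]; congr 1; ring
      linear_combination (c₁ * S.L (2 * n) (e t) + c₂ * S.L (2 * n - 1) (e t)) * hEE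
    calc (∫ t, E (-(k : ℤ)) t * P.eval (e t) ∂S.μ)
        = ∫ t, (c₁ * (E ((n : ℤ) - k) t * S.L (2 * n) (e t))
            + c₂ * (E ((n : ℤ) - k) t * S.L (2 * n - 1) (e t))) ∂S.μ := by
          congr 1; funext t; exact hpt t
      _ = _ := by
          rw [integral_add
            (((BC.const c₁).mul ((BC_E _).mul (BC_L S _))).integrable)
            (((BC.const c₂).mul ((BC_E _).mul (BC_L S _))).integrable),
            integral_const_mul, integral_const_mul]
          rfl
  -- the J-values at the boundary indices
  have hJσn : OTP.J S (n : ℤ) (S.L (2 * n)) = aC := by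
    rw [OTP.J_pos S n hn _ (BC_L S _), ← S.a_def n hn,
      innerR_lbase_L S (by omega : 2 * n - 1 < 2 * n)]
    ring
  have hJσneg : OTP.J S (-(n : ℤ)) (S.L (2 * n)) = aC := by
    rw [OTP.J_neg S n hn _ (BC_L S _), ← S.a_def n hn,
      innerR_lbase_L S (by omega : 2 * n - 1 < 2 * n)]
    ring
  have hJπn : OTP.J S (n : ℤ) (S.L (2 * n - 1)) = βC * bC + Complex.I * bC := by
    rw [OTP.J_pos S n hn _ (BC_L S _), ← S.b_def n hn, ← S.β_def n hn]
    push_cast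
    ring
  have hJπneg : OTP.J S (-(n : ℤ)) (S.L (2 * n - 1)) = βC * bC - Complex.I * bC := by
    rw [OTP.J_neg S n hn _ (BC_L S _), ← S.b_def n hn, ← S.β_def n hn]
    push_cast
    ring
  -- orthogonality of P
  have hPorth : ∀ k : ℕ, 1 ≤ k → k ≤ 2 * n →
      innerC S.μ (fun w => w ^ k) (fun w => P.eval w) = 0 := by
    intro k hk1 hk2
    rw [hPip k]
    rcases eq_or_lt_of_le hk2 with hk | hk
    · subst hk
      have hidx : ((n : ℤ) - (2 * n : ℕ)) = -(n : ℤ) := by push_cast; ring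
      rw [hidx, hJσneg, hJπneg, hc₁, hc₂]
      field_simp
      linear_combination Complex.I_sq
    · have h1 : OTP.J S ((n : ℤ) - k) (S.L (2 * n)) = 0 :=
        OTP.J_L_small S (by omega)
      have h2 : OTP.J S ((n : ℤ) - k) (S.L (2 * n - 1)) = 0 :=
        OTP.J_L_small S (by omega)
      rw [h1, h2]; ring
  have hP0 : innerC S.μ (fun w => w ^ (0 : ℕ)) (fun w => P.eval w) = 2 := by
    rw [hPip 0]
    have hidx : ((n : ℤ) - (0 : ℕ)) = (n : ℤ) := by push_cast; ring
    rw [hidx, hJσn, hJπn, hc₁, hc₂]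
    field_simp
    linear_combination -Complex.I_sq
  -- the reversed polynomial Q
  set Φ2 : Polynomial ℂ := S.Φ (2 * n) with hΦ2
  set Q : Polynomial ℂ := srev Φ2 with hQdef
  have hmapdeg : (Φ2.map (starRingEnd ℂ)).natDegree = 2 * n := by
    rw [(S.Φ_monic (2 * n)).natDegree_map, S.Φ_deg]
  have hQeval : ∀ t, Q.eval (e t)
      = E ((2 * n : ℕ) : ℤ) t * (starRingEnd ℂ) (Φ2.eval (e t)) := by
    intro t
    rw [hQdef, OTP.srev_eval, hmapdeg, ← OTP.E_natCast]
  have hQdeg : Q.natDegree ≤ 2 * n := by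
    rw [hQdef, srev]
    exact (Polynomial.reverse_natDegree_le _).trans (le_of_eq hmapdeg)
  have hQip : ∀ k : ℕ, k ≤ 2 * n →
      innerC S.μ (fun w => w ^ k) (fun w => Q.eval w)
        = (starRingEnd ℂ) (innerC S.μ (fun w => w ^ (2 * n - k)) (fun w => Φ2.eval w)) := by
    intro k hk
    rw [OTP.innerC_monomial, OTP.innerC_monomial, ← integral_conj]
    congr 1; funext t
    rw [map_mul, OTP.conj_E, neg_neg, hQeval t]
    have hEE : E (-(k : ℤ)) t * E ((2 * n : ℕ) : ℤ) t = E (((2 * n - k : ℕ) : ℤ)) t := by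
      rw [OTP.E_mul]; congr 1; omega
    linear_combination (starRingEnd ℂ) (Φ2.eval (e t)) * hEE
  have hQorth : ∀ k : ℕ, 1 ≤ k → k ≤ 2 * n →
      innerC S.μ (fun w => w ^ k) (fun w => Q.eval w) = 0 := by
    intro k h1 h2
    rw [hQip k h2, S.Φ_orth (2 * n) (2 * n - k) (by omega), map_zero]
  have hκ2 : κC ^ 2 ≠ 0 := pow_ne_zero _ hκ0
  have hΦΦ : innerC S.μ (fun w => Φ2.eval w) (fun w => Φ2.eval w) = (κC ^ 2)⁻¹ := by
    have h := S.κ_def (2 * n)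
    field_simp
    linear_combination h
  have hQ0 : innerC S.μ (fun w => w ^ (0 : ℕ)) (fun w => Q.eval w) = (κC ^ 2)⁻¹ := by
    rw [hQip 0 (by omega), Nat.sub_zero]
    set R : Polynomial ℂ := Polynomial.X ^ (2 * n) - Φ2 with hR
    have hRdeg : R.natDegree < 2 * n := by
      by_cases h : R = 0
      · rw [h, Polynomial.natDegree_zero]; omega
      · have hdq : (Polynomial.X ^ (2 * n) : Polynomial ℂ).degree = Φ2.degree := by
          rw [Polynomial.degree_X_pow,
            Polynomial.degree_eq_natDegree (S.Φ_monic (2 * n)).ne_zero, S.Φ_deg]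
        have hlc : (Polynomial.X ^ (2 * n) : Polynomial ℂ).leadingCoeff = Φ2.leadingCoeff := by
          rw [Polynomial.leadingCoeff_X_pow, (S.Φ_monic (2 * n)).leadingCoeff]
        have hd := Polynomial.degree_sub_lt hdq (pow_ne_zero _ Polynomial.X_ne_zero) hlc
        rw [Polynomial.degree_X_pow, ← hR] at hd
        exact (Polynomial.natDegree_lt_iff_degree_lt h).2 hd
    have hsplit : (fun w : ℂ => w ^ (2 * n)) = fun w => Φ2.eval w + R.eval w := by
      funext w
      rw [hR, Polynomial.eval_sub, Polynomial.eval_pow, Polynomial.eval_X]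
      ring
    have hRΦ : innerC S.μ (fun w => R.eval w) (fun w => Φ2.eval w) = 0 := by
      rw [OTP.innerC_poly_left S.μ R _ (OTP.BC_poly _)]
      refine Finset.sum_eq_zero fun k hk => ?_
      rw [S.Φ_orth (2 * n) k (by have := Finset.mem_range.1 hk; omega), mul_zero]
    have hstep : innerC S.μ (fun w => w ^ (2 * n)) (fun w => Φ2.eval w) = (κC ^ 2)⁻¹ := by
      rw [hsplit, OTP.innerC_add_left S.μ _ _ _ (OTP.BC_poly _) (OTP.BC_poly _)
        (OTP.BC_poly _), hRΦ, hΦΦ, add_zero]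
    rw [hstep, map_inv₀, map_pow, hκC, Complex.conj_ofReal]
  -- the difference polynomial
  set D : Polynomial ℂ := P - Polynomial.C (2 * κC ^ 2) * Q with hD
  have hDdeg : D.natDegree ≤ 2 * n := (Polynomial.natDegree_sub_le _ _).trans
    (max_le hPdeg ((Polynomial.natDegree_C_mul_le _ _).trans hQdeg))
  have hDip : ∀ k : ℕ, k ≤ 2 * n →
      innerC S.μ (fun w => w ^ k) (fun w => D.eval w) = 0 := by
    intro k hk
    have hfun : (fun w : ℂ => D.eval w)
        = fun w => P.eval w + (-(2 * κC ^ 2)) * Q.eval w := by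
      funext w
      rw [hD, Polynomial.eval_sub, Polynomial.eval_mul, Polynomial.eval_C]
      ring
    rw [hfun, OTP.innerC_add_right S.μ (fun w => w ^ k) (fun w => P.eval w)
      (fun w => (-(2 * κC ^ 2)) * Q.eval w) (OTP.BC_epow k) (OTP.BC_poly P)
      ((OTP.BC.const (-(2 * κC ^ 2))).mul (OTP.BC_poly Q)), OTP.innerC_smul_right]
    rcases Nat.eq_zero_or_pos k with rfl | h1
    · rw [hP0, hQ0]
      field_simp
      norm_num
    · rw [hPorth k h1 hk, hQorth k h1 hk]; ring
  have hDD : innerC S.μ (fun w => D.eval w) (fun w => D.eval w) = 0 := by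
    rw [OTP.innerC_poly_left S.μ D _ (OTP.BC_poly _)]
    refine Finset.sum_eq_zero fun k hk => ?_
    rw [hDip k (by have := Finset.mem_range.1 hk; omega), mul_zero]
  have hD0 : D = 0 := S.nontriv D hDD
  have hPQ : P = Polynomial.C (2 * κC ^ 2) * Q := sub_eq_zero.1 (hD.symm.trans hD0)
  -- evaluation at θ
  have hze : Complex.exp ((θ : ℂ) * Complex.I) = e θ := rfl
  rw [hze]
  have hLz : S.L (2 * n) (e θ) = 0 := by rw [← hσL]; exact hzero
  have hΦz : Φ2.eval (e θ) ≠ 0 := OTP.Phi_ne S (2 * n) (by omega) θ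
  have hQz : Q.eval (e θ) ≠ 0 := by
    rw [hQeval θ]
    refine mul_ne_zero (OTP.E_ne _ _) ?_
    simpa using hΦz
  have hPz := hPeval θ
  rw [hLz, mul_zero, zero_add] at hPz
  have hPz2 : P.eval (e θ) = 2 * κC ^ 2 * Q.eval (e θ) := by
    rw [hPQ, Polynomial.eval_mul, Polynomial.eval_C]
  have hπz : S.π n (e θ) = S.L (2 * n - 1) (e θ) := by rw [hπL]
  have hkey : E (n : ℤ) θ * (c₂ * S.L (2 * n - 1) (e θ)) = 2 * κC ^ 2 * Q.eval (e θ) :=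
    hPz.symm.trans hPz2
  rw [hc₂] at hkey
  have hbb : bC⁻¹ * bC = 1 := inv_mul_cancel₀ hb0
  have hmain : E (n : ℤ) θ * S.L (2 * n - 1) (e θ)
      = 2 * κC ^ 2 * bC * Complex.I * Q.eval (e θ) := by
    linear_combination (Complex.I * bC) * hkey
      + (E (n : ℤ) θ * S.L (2 * n - 1) (e θ) * bC * bC⁻¹) * Complex.I_sq
      - (E (n : ℤ) θ * S.L (2 * n - 1) (e θ)) * hbb
  have hπz0 : S.π n (e θ) ≠ 0 := by
    intro h
    have h2 : E (n : ℤ) θ * S.L (2 * n - 1) (e θ) = 0 := by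
      rw [← hπz, h, mul_zero]
    rw [h2] at hmain
    exact (mul_ne_zero (mul_ne_zero (mul_ne_zero
      (mul_ne_zero two_ne_zero hκ2) hb0) Complex.I_ne_zero) hQz) hmain.symm
  refine ⟨?_, hQz, hπz0⟩
  rw [eq_div_iff hQz, hπz, ← OTP.E_natCast]
  linear_combination -hmain
end
end
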